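/- arXiv:1305.5565 — 4 statements merged into one kernel-verified Lean document; each statement's English description precedes it below -/
import Mathlib

section
/- Fix an integer r ≥ 2. For every ε > 0 there exists δ > 0 such that the following holds. Let ν be a weighted hypergraph on nonempty finite sets V₀, …, V_r with ‖ν‖_∞ ≥ 1, and suppose ‖ν_e − 1‖_{U^e} ≤ δ for every e ∈ H ∖ {e₀}. For each ι ∈ {0,1} and each e ∈ H ∖ {e₀}, let g_e^{(ι)} : V_e → ℝ_{≥0} be a function such that either g_e^{(ι)} ≤ 1 pointwise or g_e^{(ι)} ≤ ν_e pointwise. Then | 𝔼[ (ν_{e₀}(x_{e₀}) − 1) · ∏_{ι∈{0,1}} ∏_{e∈H∖{e₀}} g_e^{(ι)}(x₀^{(ι)}, x_{e∖{0}}) | x₀^{(0)}, x₀^{(1)} ∈ V₀, x_{e₀} ∈ V_{e₀} ] | ≤ (1 + ε) · ‖ν_{e₀} − 1‖_{U^{e₀}} · ‖ν‖_∞^r. -/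
set_option maxHeartbeats 1000000

open Function

open Finset
open scoped BigOperators

/-- Given `x₀, x₁ ∈ ∏ i, V i` and `ω : ι → Bool`, the mixed point `x^(ω)` whose `i`-th
coordinate is that of `x^(ωᵢ)` (with `false ↦ x₀`, `true ↦ x₁`). -/
def mixPoint {ι : Type} {V : ι → Type} (ω : ι → Bool) (x₀ x₁ : ∀ i, V i) : ∀ i, V i :=
  fun i => if ω i then x₁ i else x₀ i

/-- The Gowers box norm `‖g‖_{U^e}` of a function `g : ∏ i, V i → ℝ`. -/
noncomputable def boxNorm {ι : Type} [Fintype ι] [DecidableEq ι] {V : ι → Type}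
    [∀ i, Fintype (V i)] (g : (∀ i, V i) → ℝ) : ℝ :=
  (𝔼 x₀ : ∀ i, V i, 𝔼 x₁ : ∀ i, V i, ∏ ω : ι → Bool, g (mixPoint ω x₀ x₁)) ^
    ((1 : ℝ) / 2 ^ Fintype.card ι)

/-- `V_{e_j}`, the product of the `V i` over the edge `e_j = J ∖ {j}`. -/
abbrev EdgeSpace {r : ℕ} (V : Fin (r + 1) → Type) (j : Fin (r + 1)) : Type :=
  ∀ i : {i : Fin (r + 1) // i ≠ j}, V i

/-- `‖ν‖_∞`, the maximum value taken by any of the weights `ν_e`, `e ∈ H`,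
of a weighted hypergraph `ν` (where `ν j` is the weight on the edge `e_j`). -/
noncomputable def hypSup {r : ℕ} (V : Fin (r + 1) → Type) [∀ i, Fintype (V i)]
    (ν : ∀ j : Fin (r + 1), EdgeSpace V j → ℝ) : ℝ :=
  ⨆ j, ⨆ x : EdgeSpace V j, ν j x

/-- The point of `V_{e_j}` with `0`-coordinate `x₀` and remaining coordinates given by
`y ∈ V_{e₀}` (for `j ≠ 0`; the coordinate `0` belongs to `e_j`). -/
def glue {r : ℕ} {V : Fin (r + 1) → Type} (j : Fin (r + 1)) (x₀ : V 0)
    (y : EdgeSpace V 0) : EdgeSpace V j :=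
  fun i => if h : (i : Fin (r + 1)) = 0 then cast (congrArg V h).symm x₀ else y ⟨i, h⟩


section EpatSec

variable {A B : Type} [Fintype A] [Fintype B]

lemma expect_pair (f : A × B → ℝ) : 𝔼 p : A × B, f p = 𝔼 a : A, 𝔼 b : B, f (a, b) := by
  rw [← Finset.univ_product_univ, Finset.expect_product]

variable {κ : Type} [DecidableEq κ] [Fintype κ] {W : κ → Type} [∀ k, Fintype (W k)]
  [∀ k, Nonempty (W k)]

def updEquiv (W : κ → Type) (i : κ) : ((∀ k, W k) × W i) ≃ ((∀ k, W k) × W i) where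
  toFun := fun p => (Function.update p.1 i p.2, p.1 i)
  invFun := fun p => (Function.update p.1 i p.2, p.1 i)
  left_inv := by intro p; simp [Function.update_idem]
  right_inv := by intro p; simp [Function.update_idem]

lemma expect_resample (i : κ) (H : (∀ k, W k) → ℝ) :
    𝔼 y : ∀ k, W k, H y = 𝔼 y : ∀ k, W k, 𝔼 t : W i, H (Function.update y i t) := by
  have h1 : 𝔼 p : (∀ k, W k) × W i, H (Function.update p.1 i p.2)
      = 𝔼 p : (∀ k, W k) × W i, H p.1 :=
    Fintype.expect_equiv (updEquiv W i) _ _ (fun p => rfl)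
  calc 𝔼 y : ∀ k, W k, H y = 𝔼 y : ∀ k, W k, 𝔼 _t : W i, H y := by
        simp
    _ = 𝔼 p : (∀ k, W k) × W i, H p.1 := (expect_pair (fun p => H p.1)).symm
    _ = 𝔼 p : (∀ k, W k) × W i, H (Function.update p.1 i p.2) := h1.symm
    _ = 𝔼 y : ∀ k, W k, 𝔼 t : W i, H (Function.update y i t) :=
        expect_pair (fun p => H (Function.update p.1 i p.2))

lemma expect_resample_fst (i : κ) (H : ((∀ k, W k) × (∀ k, W k)) → ℝ) :
    𝔼 z : (∀ k, W k) × (∀ k, W k), H z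
      = 𝔼 z : (∀ k, W k) × (∀ k, W k), 𝔼 t : W i, H (Function.update z.1 i t, z.2) := by
  rw [expect_pair H, expect_pair (fun z => 𝔼 t : W i, H (Function.update z.1 i t, z.2))]
  rw [expect_resample i (fun a => 𝔼 b : ∀ k, W k, H (a, b))]
  exact Finset.expect_congr rfl fun a _ => Finset.expect_comm _ _ _

lemma expect_resample_snd (i : κ) (H : ((∀ k, W k) × (∀ k, W k)) → ℝ) :
    𝔼 z : (∀ k, W k) × (∀ k, W k), H z
      = 𝔼 z : (∀ k, W k) × (∀ k, W k), 𝔼 t : W i, H (z.1, Function.update z.2 i t) := by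
  rw [expect_pair H, expect_pair (fun z => 𝔼 t : W i, H (z.1, Function.update z.2 i t))]
  exact Finset.expect_congr rfl fun a _ => expect_resample i (fun b => H (a, b))

/-- weighted Cauchy-Schwarz -/
lemma expect_weighted_cs {α : Type} [Fintype α] [Nonempty α] (P Q : α → ℝ)
    (hP : ∀ a, 0 ≤ P a) :
    (𝔼 a, P a * Q a) ^ 2 ≤ (𝔼 a, P a) * (𝔼 a, P a * Q a ^ 2) := by
  have h := Finset.expect_mul_sq_le_sq_mul_sq Finset.univ
    (fun a => Real.sqrt (P a)) (fun a => Real.sqrt (P a) * Q a)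
  have e1 : ∀ a, Real.sqrt (P a) * (Real.sqrt (P a) * Q a) = P a * Q a := by
    intro a
    rw [← mul_assoc, Real.mul_self_sqrt (hP a)]
  have e2 : ∀ a, Real.sqrt (P a) ^ 2 = P a := fun a => Real.sq_sqrt (hP a)
  have e3 : ∀ a, (Real.sqrt (P a) * Q a) ^ 2 = P a * Q a ^ 2 := by
    intro a; rw [mul_pow, e2]
  simp only [e1, e2, e3] at h
  exact h

end EpatSec

section Mix
variable {κ : Type} [DecidableEq κ] {W : κ → Type}

lemma mix_upd_ff {α : κ → Bool} {i : κ} (hα : α i = false) (z₀ z₁ : ∀ k, W k)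
    (t₀ t₁ : W i) :
    mixPoint α (Function.update z₀ i t₀) (Function.update z₁ i t₁)
      = Function.update (mixPoint α z₀ z₁) i t₀ := by
  funext k
  by_cases hk : k = i
  · subst hk; simp [mixPoint, hα]
  · simp [mixPoint, Function.update_of_ne hk]

lemma mix_upd_tt {α : κ → Bool} {i : κ} (z₀ z₁ : ∀ k, W k) (t₀ t₁ : W i) :
    mixPoint (Function.update α i true) (Function.update z₀ i t₀) (Function.update z₁ i t₁)
      = Function.update (mixPoint α z₀ z₁) i t₁ := by
  funext k
  by_cases hk : k = i
  · subst hk; simp [mixPoint]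
  · simp [mixPoint, Function.update_of_ne hk]

lemma mix_upd_left_ff {α : κ → Bool} {i : κ} (hα : α i = false) (z₀ z₁ : ∀ k, W k)
    (t : W i) :
    mixPoint α (Function.update z₀ i t) z₁ = Function.update (mixPoint α z₀ z₁) i t := by
  funext k
  by_cases hk : k = i
  · subst hk; simp [mixPoint, hα]
  · simp [mixPoint, Function.update_of_ne hk]

lemma mix_upd_right_ff {α : κ → Bool} {i : κ} (hα : α i = false) (z₀ z₁ : ∀ k, W k)
    (t : W i) :
    mixPoint α z₀ (Function.update z₁ i t) = mixPoint α z₀ z₁ := by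
  funext k
  by_cases hk : k = i
  · subst hk; simp [mixPoint, hα]
  · simp [mixPoint, Function.update_of_ne hk]

lemma mix_upd_tt2 {α : κ → Bool} {i : κ} (hα : α i = true) (z₀ z₁ : ∀ k, W k)
    (t₀ t₁ : W i) :
    mixPoint α (Function.update z₀ i t₀) (Function.update z₁ i t₁)
      = Function.update (mixPoint α z₀ z₁) i t₁ := by
  funext k
  by_cases hk : k = i
  · subst hk; simp [mixPoint, hα]
  · simp [mixPoint, Function.update_of_ne hk]

lemma update_mix_flip {α : κ → Bool} {i : κ} (b : Bool) (z₀ z₁ : ∀ k, W k) (t : W i) :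
    Function.update (mixPoint (Function.update α i b) z₀ z₁) i t
      = Function.update (mixPoint α z₀ z₁) i t := by
  funext k
  by_cases hk : k = i
  · subst hk; simp
  · simp [mixPoint, Function.update_of_ne hk]

end Mix

section Pat

variable {κ : Type} [DecidableEq κ] [Fintype κ]

/-- patterns supported on `S` -/
def Omega (S : Finset κ) : Finset (κ → Bool) :=
  univ.filter (fun ω => ∀ i, ω i = true → i ∈ S)

lemma mem_Omega {S : Finset κ} {ω : κ → Bool} : ω ∈ Omega S ↔ ∀ i, ω i = true → i ∈ S := by
  simp [Omega]

lemma Omega_ff {S : Finset κ} {ω : κ → Bool} (hω : ω ∈ Omega S) {j : κ} (hj : j ∉ S) :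
    ω j = false := by
  rcases mem_Omega.1 hω j with h
  cases hωj : ω j
  · rfl
  · exact absurd (h hωj) hj

lemma const_false_mem_Omega {S : Finset κ} : (fun _ => false) ∈ Omega S := by
  simp [mem_Omega]

lemma Omega_empty : Omega (∅ : Finset κ) = {fun _ => false} := by
  ext ω
  simp only [mem_Omega, Finset.mem_singleton, Finset.notMem_empty]
  constructor
  · intro h; funext i; cases hi : ω i
    · rfl
    · exact absurd (h i hi) id
  · rintro rfl; simp

/-- disjointness of a pattern set with all `α i = false` and its flip -/
lemma disj_boxAt {i : κ} {T : Finset (κ → Bool)} (hT : ∀ α ∈ T, α i = false) :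
    Disjoint T (T.image (fun α => Function.update α i true)) := by
  rw [Finset.disjoint_right]
  rintro α hα hmem
  rcases Finset.mem_image.1 hα with ⟨β, hβ, rfl⟩
  have := hT _ hmem
  simp at this

lemma injOn_upd_true {i : κ} {T : Finset (κ → Bool)} (hT : ∀ α ∈ T, α i = false) :
    Set.InjOn (fun α => Function.update α i true) (T : Set (κ → Bool)) := by
  intro a ha b hb hab
  funext k
  by_cases hk : k = i
  · subst hk; rw [hT a ha, hT b hb]
  · have := congrFun hab k
    simpa [Function.update_of_ne hk] using this

lemma injOn_upd_false {i : κ} {T : Finset (κ → Bool)} (hT : ∀ α ∈ T, α i = true) :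
    Set.InjOn (fun α => Function.update α i false) (T : Set (κ → Bool)) := by
  intro a ha b hb hab
  funext k
  by_cases hk : k = i
  · subst hk; rw [hT a ha, hT b hb]
  · have := congrFun hab k
    simpa [Function.update_of_ne hk] using this

lemma Omega_insert {S : Finset κ} {j : κ} (hj : j ∉ S) :
    Omega (insert j S)
      = Omega S ∪ (Omega S).image (fun ω => Function.update ω j true) := by
  ext ω
  simp only [mem_Omega, Finset.mem_union, Finset.mem_image]
  constructor
  · intro h
    cases hωj : ω j
    · left
      intro i hi
      rcases Finset.mem_insert.1 (h i hi) with h' | h'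
      · subst h'; rw [hi] at hωj; exact absurd hωj (by simp)
      · exact h'
    · right
      refine ⟨Function.update ω j false, ?_, ?_⟩
      · intro i hi
        by_cases hij : i = j
        · subst hij; simp at hi
        · rw [Function.update_of_ne hij] at hi
          rcases Finset.mem_insert.1 (h i hi) with h' | h'
          · exact absurd h' hij
          · exact h'
      · funext k
        by_cases hk : k = j
        · subst hk; simp [hωj]
        · simp [Function.update_of_ne hk]
  · rintro (h | ⟨β, hβ, rfl⟩)
    · intro i hi; exact Finset.mem_insert_of_mem (h i hi)
    · intro i hi
      by_cases hij : i = j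
      · subst hij; exact Finset.mem_insert_self _ _
      · rw [Function.update_of_ne hij] at hi
        exact Finset.mem_insert_of_mem (hβ i hi)

lemma Omega_insert_prod {M : Type} [CommMonoid M] {S : Finset κ} {j : κ} (hj : j ∉ S)
    (F : (κ → Bool) → M) :
    ∏ ω ∈ Omega (insert j S), F ω
      = (∏ ω ∈ Omega S, F ω) * ∏ ω ∈ Omega S, F (Function.update ω j true) := by
  have hsub : ∀ α ∈ Omega S, α j = false := fun α hα => Omega_ff hα hj
  rw [Omega_insert hj, Finset.prod_union (disj_boxAt hsub),
    Finset.prod_image (injOn_upd_true hsub)]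

lemma Omega_card {S : Finset κ} : (Omega S).card = 2 ^ S.card := by
  classical
  induction S using Finset.induction_on with
  | empty => simp [Omega_empty]
  | @insert j S hj ih =>
    have hsub : ∀ α ∈ Omega S, α j = false := fun α hα => Omega_ff hα hj
    rw [Omega_insert hj, Finset.card_union_of_disjoint (disj_boxAt hsub),
      Finset.card_image_of_injOn (injOn_upd_true hsub), ih,
      Finset.card_insert_of_notMem hj]
    ring

end Pat

section EpatMain

set_option linter.unusedSectionVars false

variable {κ : Type} [DecidableEq κ] [Fintype κ] {W : κ → Type} [∀ k, Fintype (W k)]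
  [∀ k, Nonempty (W k)]

/-- expectation of a product of `h` over a pattern set -/
noncomputable def Epat (h : (∀ k, W k) → ℝ) (T : Finset (κ → Bool)) : ℝ :=
  𝔼 z : (∀ k, W k) × (∀ k, W k), ∏ α ∈ T, h (mixPoint α z.1 z.2)

def boxAt (i : κ) (T : Finset (κ → Bool)) : Finset (κ → Bool) :=
  T ∪ T.image (fun α => Function.update α i true)

lemma Epat_box (h : (∀ k, W k) → ℝ) (i : κ) (T : Finset (κ → Bool))
    (hT : ∀ α ∈ T, α i = false) :
    Epat h (boxAt i T) = 𝔼 z : (∀ k, W k) × (∀ k, W k),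
      (𝔼 t : W i, ∏ α ∈ T, h (Function.update (mixPoint α z.1 z.2) i t)) ^ 2 := by
  unfold Epat boxAt
  set F : ((∀ k, W k) × (∀ k, W k)) → ℝ :=
    fun z => ∏ α ∈ T ∪ T.image (fun α => Function.update α i true), h (mixPoint α z.1 z.2)
    with hF
  calc 𝔼 z : (∀ k, W k) × (∀ k, W k), F z
      = 𝔼 z : (∀ k, W k) × (∀ k, W k), 𝔼 t₀ : W i, F (Function.update z.1 i t₀, z.2) :=
        expect_resample_fst i F
    _ = 𝔼 z : (∀ k, W k) × (∀ k, W k), 𝔼 t₁ : W i, 𝔼 t₀ : W i,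
          F (Function.update z.1 i t₀, Function.update z.2 i t₁) :=
        expect_resample_snd i (fun z => 𝔼 t₀ : W i, F (Function.update z.1 i t₀, z.2))
    _ = 𝔼 z : (∀ k, W k) × (∀ k, W k), 𝔼 t₁ : W i, 𝔼 t₀ : W i,
          (∏ α ∈ T, h (Function.update (mixPoint α z.1 z.2) i t₁))
            * ∏ α ∈ T, h (Function.update (mixPoint α z.1 z.2) i t₀) := by
        refine Finset.expect_congr rfl fun z _ => ?_
        refine Finset.expect_congr rfl fun t₁ _ => ?_
        refine Finset.expect_congr rfl fun t₀ _ => ?_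
        rw [hF]
        dsimp only
        rw [Finset.prod_union (disj_boxAt hT), Finset.prod_image (injOn_upd_true hT)]
        rw [mul_comm]
        congr 1
        · exact Finset.prod_congr rfl fun α _ => by rw [mix_upd_tt]
        · exact Finset.prod_congr rfl fun α hα => by rw [mix_upd_ff (hT α hα)]
    _ = 𝔼 z : (∀ k, W k) × (∀ k, W k),
          (𝔼 t : W i, ∏ α ∈ T, h (Function.update (mixPoint α z.1 z.2) i t)) ^ 2 := by
        refine Finset.expect_congr rfl fun z _ => ?_
        rw [sq, Fintype.expect_mul_expect]

lemma Epat_box_nonneg (h : (∀ k, W k) → ℝ) (i : κ) (T : Finset (κ → Bool))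
    (hT : ∀ α ∈ T, α i = false) : 0 ≤ Epat h (boxAt i T) := by
  rw [Epat_box h i T hT]
  exact Finset.expect_nonneg fun z _ => sq_nonneg _

end EpatMain

section EpatStep

set_option linter.unusedSectionVars false

variable {κ : Type} [DecidableEq κ] [Fintype κ] {W : κ → Type} [∀ k, Fintype (W k)]
  [∀ k, Nonempty (W k)]

lemma Epat_step (h : (∀ k, W k) → ℝ) (i : κ) (T : Finset (κ → Bool)) :
    |Epat h T| ≤ Real.sqrt (Epat h (boxAt i (T.filter fun α => α i = false)))
      * Real.sqrt (Epat h (boxAt i (Finset.image (fun α => Function.update α i false)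
          (T.filter fun α => α i = true)))) := by
  classical
  set T₀ := T.filter (fun α => α i = false) with hT₀
  set T₁ := T.filter (fun α => α i = true) with hT₁
  set T₁f := T₁.image (fun α => Function.update α i false) with hT₁f
  have hT₀ff : ∀ α ∈ T₀, α i = false := fun α hα => (Finset.mem_filter.1 hα).2
  have hT₁tt : ∀ α ∈ T₁, α i = true := fun α hα => (Finset.mem_filter.1 hα).2
  have hT₁fff : ∀ α ∈ T₁f, α i = false := by
    intro α hα
    rcases Finset.mem_image.1 hα with ⟨β, _, rfl⟩
    simp
  -- G functions
  set G₀ : ((∀ k, W k) × (∀ k, W k)) → ℝ :=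
    fun z => 𝔼 t : W i, ∏ α ∈ T₀, h (Function.update (mixPoint α z.1 z.2) i t) with hG₀
  set G₁ : ((∀ k, W k) × (∀ k, W k)) → ℝ :=
    fun z => 𝔼 t : W i, ∏ α ∈ T₁f, h (Function.update (mixPoint α z.1 z.2) i t) with hG₁
  have key : Epat h T = 𝔼 z : (∀ k, W k) × (∀ k, W k), G₀ z * G₁ z := by
    unfold Epat
    set F : ((∀ k, W k) × (∀ k, W k)) → ℝ :=
      fun z => ∏ α ∈ T, h (mixPoint α z.1 z.2) with hF
    calc 𝔼 z : (∀ k, W k) × (∀ k, W k), F z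
        = 𝔼 z : (∀ k, W k) × (∀ k, W k), 𝔼 t₀ : W i, F (Function.update z.1 i t₀, z.2) :=
          expect_resample_fst i F
      _ = 𝔼 z : (∀ k, W k) × (∀ k, W k), 𝔼 t₁ : W i, 𝔼 t₀ : W i,
            F (Function.update z.1 i t₀, Function.update z.2 i t₁) :=
          expect_resample_snd i (fun z => 𝔼 t₀ : W i, F (Function.update z.1 i t₀, z.2))
      _ = 𝔼 z : (∀ k, W k) × (∀ k, W k), 𝔼 t₁ : W i, 𝔼 t₀ : W i,
            ((∏ α ∈ T₁f, h (Function.update (mixPoint α z.1 z.2) i t₁))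
              * ∏ α ∈ T₀, h (Function.update (mixPoint α z.1 z.2) i t₀)) := by
          refine Finset.expect_congr rfl fun z _ => ?_
          refine Finset.expect_congr rfl fun t₁ _ => ?_
          refine Finset.expect_congr rfl fun t₀ _ => ?_
          rw [hF]
          dsimp only
          rw [← Finset.prod_filter_mul_prod_filter_not T (fun α => α i = false)]
          rw [mul_comm]
          congr 1
          · -- filter not part equals T₁f product
            have : T.filter (fun α => ¬ α i = false) = T₁ := by
              apply Finset.filter_congr
              intro α _
              simp
            rw [this]
            rw [hT₁f, Finset.prod_image (injOn_upd_false hT₁tt)]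
            refine Finset.prod_congr rfl fun α hα => ?_
            rw [mix_upd_tt2 (hT₁tt α hα), update_mix_flip]
          · refine Finset.prod_congr rfl fun α hα => ?_
            rw [mix_upd_ff (hT₀ff α hα)]
      _ = 𝔼 z : (∀ k, W k) × (∀ k, W k), G₀ z * G₁ z := by
          refine Finset.expect_congr rfl fun z _ => ?_
          rw [hG₀, hG₁]
          dsimp only
          rw [mul_comm (𝔼 t : W i, ∏ α ∈ T₀, h (Function.update (mixPoint α z.1 z.2) i t))]
          rw [Fintype.expect_mul_expect]
  rw [key]
  have hcs := Finset.expect_mul_sq_le_sq_mul_sq Finset.univ G₀ G₁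
  have h0 : (0:ℝ) ≤ 𝔼 z : (∀ k, W k) × (∀ k, W k), G₀ z ^ 2 :=
    Finset.expect_nonneg fun z _ => sq_nonneg _
  have h1 : (0:ℝ) ≤ 𝔼 z : (∀ k, W k) × (∀ k, W k), G₁ z ^ 2 :=
    Finset.expect_nonneg fun z _ => sq_nonneg _
  have habs : |𝔼 z : (∀ k, W k) × (∀ k, W k), G₀ z * G₁ z|
      ≤ Real.sqrt ((𝔼 z : (∀ k, W k) × (∀ k, W k), G₀ z ^ 2)
          * 𝔼 z : (∀ k, W k) × (∀ k, W k), G₁ z ^ 2) := by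
    rw [← Real.sqrt_sq_eq_abs]
    exact Real.sqrt_le_sqrt hcs
  refine habs.trans ?_
  rw [Real.sqrt_mul h0]
  have e0 : (𝔼 z : (∀ k, W k) × (∀ k, W k), G₀ z ^ 2) = Epat h (boxAt i T₀) :=
    (Epat_box h i T₀ hT₀ff).symm
  have e1 : (𝔼 z : (∀ k, W k) × (∀ k, W k), G₁ z ^ 2) = Epat h (boxAt i T₁f) :=
    (Epat_box h i T₁f hT₁fff).symm
  rw [e0, e1]

end EpatStep

section PatBound

set_option linter.unusedSectionVars false

variable {κ : Type} [DecidableEq κ] [Fintype κ] {W : κ → Type} [∀ k, Fintype (W k)]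
  [∀ k, Nonempty (W k)]

lemma Epat_empty (h : (∀ k, W k) → ℝ) : Epat h ∅ = 1 := by
  unfold Epat
  simp

lemma univ_eq_boxAt (i : κ) :
    (Finset.univ : Finset (κ → Bool)) = boxAt i (Finset.univ.filter fun α => α i = false) := by
  ext α
  simp only [Finset.mem_univ, true_iff, boxAt, Finset.mem_union, Finset.mem_filter,
    Finset.mem_image]
  cases hα : α i
  · left; exact ⟨trivial, rfl⟩
  · right
    refine ⟨Function.update α i false, ⟨trivial, by simp⟩, ?_⟩
    funext k
    by_cases hk : k = i
    · subst hk; simp [hα]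
    · simp [Function.update_of_ne hk]

lemma Epat_univ_nonneg [Nonempty κ] (h : (∀ k, W k) → ℝ) :
    0 ≤ Epat h Finset.univ := by
  obtain ⟨i⟩ := ‹Nonempty κ›
  rw [univ_eq_boxAt i]
  exact Epat_box_nonneg h i _ (fun α hα => (Finset.mem_filter.1 hα).2)

lemma sym_eq_univ (T : Finset (κ → Bool))
    (hsym : ∀ i, ∀ α ∈ T, Function.update α i (!α i) ∈ T) (hne : T.Nonempty) :
    T = Finset.univ := by
  classical
  obtain ⟨α₀, hα₀⟩ := hne
  have key : ∀ (n : ℕ) (D : Finset κ) (α : κ → Bool), D.card = n → α ∈ T →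
      ∀ β : κ → Bool, (∀ k, α k ≠ β k → k ∈ D) → β ∈ T := by
    intro n
    induction n using Nat.strong_induction_on with
    | _ n ih =>
      intro D α hD hα β hdis
      by_cases hall : ∀ k, α k = β k
      · have : α = β := funext hall
        rwa [← this]
      · push_neg at hall
        obtain ⟨k, hk⟩ := hall
        have hkD : k ∈ D := hdis k hk
        have hαk : Function.update α k (!α k) ∈ T := hsym k α hα
        have hβk : β k = !α k := by
          cases h1 : α k <;> cases h2 : β k <;> simp_all
        have hcard : (D.erase k).card < n := by
          rw [← hD]
          exact Finset.card_erase_lt_of_mem hkD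
        refine ih _ hcard (D.erase k) _ rfl hαk β ?_
        intro k' hk'
        by_cases hkk : k' = k
        · subst hkk
          rw [Function.update_self] at hk'
          exact absurd hβk.symm hk'
        · rw [Function.update_of_ne hkk] at hk'
          exact Finset.mem_erase.2 ⟨hkk, hdis k' hk'⟩
  apply Finset.eq_univ_of_forall
  intro β
  exact key (Finset.univ.card) Finset.univ α₀ rfl hα₀ β (fun k _ => Finset.mem_univ k)

end PatBound

section PatBound2

set_option linter.unusedSectionVars false

variable {κ : Type} [DecidableEq κ] [Fintype κ] {W : κ → Type} [∀ k, Fintype (W k)]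
  [∀ k, Nonempty (W k)]

lemma update_flip_comm {β : κ → Bool} {i k : κ} (hki : k ≠ i) (c : Bool) :
    Function.update (Function.update β i c) k (!(Function.update β i c k))
      = Function.update (Function.update β k (!β k)) i c := by
  have hv : Function.update β i c k = β k := Function.update_of_ne hki _ _
  rw [hv]
  exact Function.update_comm hki.symm c (!β k) β

lemma card_boxAt {i : κ} {T : Finset (κ → Bool)} (hT : ∀ α ∈ T, α i = false) :
    (boxAt i T).card = 2 * T.card := by
  rw [boxAt, Finset.card_union_of_disjoint (disj_boxAt hT),
    Finset.card_image_of_injOn (injOn_upd_true hT)]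
  ring

lemma boxAt_flip_i {i : κ} {U : Finset (κ → Bool)} (hU : ∀ α ∈ U, α i = false) :
    ∀ α ∈ boxAt i U, Function.update α i (!α i) ∈ boxAt i U := by
  intro α hα
  rcases Finset.mem_union.1 hα with hα | hα
  · refine Finset.mem_union_right _ (Finset.mem_image.2 ⟨α, hα, ?_⟩)
    rw [hU α hα]
    simp
  · rcases Finset.mem_image.1 hα with ⟨β, hβ, rfl⟩
    apply Finset.mem_union_left
    have h1 : Function.update β i true i = true := by simp
    rw [h1]
    have h2 : Function.update (Function.update β i true) i (!true) = β := by
      rw [Function.update_idem]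
      simp only [Bool.not_true]
      conv_rhs => rw [← Function.update_eq_self i β]
      rw [hU β hβ]
    rw [h2]
    exact hβ

lemma boxAt_flip_k {i k : κ} (hki : k ≠ i) {U : Finset (κ → Bool)}
    (hstab : ∀ α ∈ U, Function.update α k (!α k) ∈ U) :
    ∀ α ∈ boxAt i U, Function.update α k (!α k) ∈ boxAt i U := by
  intro α hα
  rcases Finset.mem_union.1 hα with hα | hα
  · exact Finset.mem_union_left _ (hstab α hα)
  · rcases Finset.mem_image.1 hα with ⟨β, hβ, rfl⟩
    refine Finset.mem_union_right _ (Finset.mem_image.2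
      ⟨Function.update β k (!β k), hstab β hβ, ?_⟩)
    exact (update_flip_comm hki true).symm

theorem Epat_le [Nonempty κ] (h : (∀ k, W k) → ℝ) (R : Finset κ) :
    ∀ T : Finset (κ → Bool),
      (∀ i ∉ R, ∀ α ∈ T, Function.update α i (!α i) ∈ T) →
      |Epat h T| ≤ ((Epat h Finset.univ) ^ ((1:ℝ)/2^(Fintype.card κ))) ^ T.card := by
  classical
  set B : ℝ := (Epat h Finset.univ) ^ ((1:ℝ)/2^(Fintype.card κ)) with hB
  have hB0 : 0 ≤ B := Real.rpow_nonneg (Epat_univ_nonneg h) _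
  induction R using Finset.induction_on with
  | empty =>
    intro T hsym
    rcases T.eq_empty_or_nonempty with rfl | hne
    · rw [Epat_empty]
      simp
    · have hTuniv : T = Finset.univ := sym_eq_univ T (fun i => hsym i (by simp)) hne
      subst hTuniv
      rw [abs_of_nonneg (Epat_univ_nonneg h)]
      have hcard : (Finset.univ : Finset (κ → Bool)).card = 2 ^ Fintype.card κ := by
        rw [Finset.card_univ]
        simp [Fintype.card_fun]
      rw [hcard, hB]
      rw [← Real.rpow_natCast ((Epat h Finset.univ) ^ ((1:ℝ)/2^(Fintype.card κ))) (2 ^ Fintype.card κ),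
        ← Real.rpow_mul (Epat_univ_nonneg h)]
      have : (1:ℝ)/2^(Fintype.card κ) * ((2:ℝ)^(Fintype.card κ) : ℝ) = 1 := by
        field_simp
      rw [show ((2 ^ Fintype.card κ : ℕ) : ℝ) = (2:ℝ)^(Fintype.card κ) by push_cast; ring, this,
        Real.rpow_one]
  | @insert i R hiR ih =>
    intro T hsym
    set T₀ := T.filter (fun α => α i = false) with hT₀
    set T₁ := T.filter (fun α => α i = true) with hT₁
    set T₁f := T₁.image (fun α => Function.update α i false) with hT₁f
    have hT₀ff : ∀ α ∈ T₀, α i = false := fun α hα => (Finset.mem_filter.1 hα).2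
    have hT₁tt : ∀ α ∈ T₁, α i = true := fun α hα => (Finset.mem_filter.1 hα).2
    have hT₁fff : ∀ α ∈ T₁f, α i = false := by
      intro α hα
      rcases Finset.mem_image.1 hα with ⟨β, _, rfl⟩
      simp
    have hstab₀ : ∀ k, k ≠ i → k ∉ R → ∀ α ∈ T₀, Function.update α k (!α k) ∈ T₀ := by
      intro k hki hkR α hα
      have h1 := hsym k (by simp [hki, hkR]) α (Finset.mem_filter.1 hα).1
      refine Finset.mem_filter.2 ⟨h1, ?_⟩
      rw [Function.update_of_ne hki.symm]
      exact hT₀ff α hα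
    have hstab₁f : ∀ k, k ≠ i → k ∉ R → ∀ α ∈ T₁f, Function.update α k (!α k) ∈ T₁f := by
      intro k hki hkR α hα
      rcases Finset.mem_image.1 hα with ⟨β, hβ, rfl⟩
      have h1 := hsym k (by simp [hki, hkR]) β (Finset.mem_filter.1 hβ).1
      have h2 : Function.update β k (!β k) ∈ T₁ := by
        refine Finset.mem_filter.2 ⟨h1, ?_⟩
        rw [Function.update_of_ne hki.symm]
        exact hT₁tt β hβ
      exact Finset.mem_image.2 ⟨Function.update β k (!β k), h2,
        (update_flip_comm hki false).symm⟩
    have hsym₀ : ∀ k ∉ R, ∀ α ∈ boxAt i T₀, Function.update α k (!α k) ∈ boxAt i T₀ := by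
      intro k hkR
      by_cases hki : k = i
      · subst hki; exact boxAt_flip_i hT₀ff
      · exact boxAt_flip_k hki (hstab₀ k hki hkR)
    have hsym₁ : ∀ k ∉ R, ∀ α ∈ boxAt i T₁f, Function.update α k (!α k) ∈ boxAt i T₁f := by
      intro k hkR
      by_cases hki : k = i
      · subst hki; exact boxAt_flip_i hT₁fff
      · exact boxAt_flip_k hki (hstab₁f k hki hkR)
    have ih₀ := ih (boxAt i T₀) hsym₀
    have ih₁ := ih (boxAt i T₁f) hsym₁
    have hbox₀0 : 0 ≤ Epat h (boxAt i T₀) := Epat_box_nonneg h i T₀ hT₀ff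
    have hbox₁0 : 0 ≤ Epat h (boxAt i T₁f) := Epat_box_nonneg h i T₁f hT₁fff
    rw [abs_of_nonneg hbox₀0] at ih₀
    rw [abs_of_nonneg hbox₁0] at ih₁
    have hstep := Epat_step h i T
    rw [← hT₀, ← hT₁, ← hT₁f] at hstep
    have hcard₀ : (boxAt i T₀).card = 2 * T₀.card := card_boxAt hT₀ff
    have hcard₁ : (boxAt i T₁f).card = 2 * T₁f.card := card_boxAt hT₁fff
    have hcard₁' : T₁f.card = T₁.card := Finset.card_image_of_injOn (injOn_upd_false hT₁tt)
    have hcardT : T₀.card + T₁.card = T.card := by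
      rw [hT₀, hT₁]
      have hfilter : Finset.filter (fun α => α i = true) T
          = Finset.filter (fun α => ¬ α i = false) T := by
        apply Finset.filter_congr
        intro α _
        simp
      rw [hfilter]
      exact Finset.card_filter_add_card_filter_not _
    have hs₀ : Real.sqrt (B ^ (boxAt i T₀).card) = B ^ T₀.card := by
      rw [hcard₀, mul_comm, pow_mul, Real.sqrt_sq (pow_nonneg hB0 _)]
    have hs₁ : Real.sqrt (B ^ (boxAt i T₁f).card) = B ^ T₁.card := by
      rw [hcard₁, hcard₁', mul_comm, pow_mul, Real.sqrt_sq (pow_nonneg hB0 _)]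
    have hm : |Epat h T| ≤ Real.sqrt (B ^ (boxAt i T₀).card)
        * Real.sqrt (B ^ (boxAt i T₁f).card) :=
      hstep.trans (mul_le_mul (Real.sqrt_le_sqrt ih₀) (Real.sqrt_le_sqrt ih₁)
        (Real.sqrt_nonneg _) (Real.sqrt_nonneg _))
    rw [hs₀, hs₁, ← pow_add, hcardT] at hm
    exact hm

end PatBound2

/-! ## expansion bound -/

section Expansion

set_option linter.unusedSectionVars false

variable {κ : Type} [DecidableEq κ] [Fintype κ] {W : κ → Type} [∀ k, Fintype (W k)]
  [∀ k, Nonempty (W k)]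

lemma expect_prod_one_add_le [Nonempty κ] (h : (∀ k, W k) → ℝ) (A : Finset (κ → Bool))
    {δ : ℝ} (hδ0 : 0 ≤ δ) (hδ1 : δ ≤ 1)
    (hbn : (Epat h Finset.univ) ^ ((1:ℝ)/2^(Fintype.card κ)) ≤ δ) :
    (𝔼 z : (∀ k, W k) × (∀ k, W k), ∏ α ∈ A, (h (mixPoint α z.1 z.2) + 1))
      ≤ 1 + 2 ^ A.card * δ := by
  classical
  have hexp : (𝔼 z : (∀ k, W k) × (∀ k, W k), ∏ α ∈ A, (h (mixPoint α z.1 z.2) + 1))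
      = ∑ T ∈ A.powerset, Epat h T := by
    have h1 : ∀ z : (∀ k, W k) × (∀ k, W k),
        ∏ α ∈ A, (h (mixPoint α z.1 z.2) + 1)
          = ∑ T ∈ A.powerset, ∏ α ∈ T, h (mixPoint α z.1 z.2) := by
      intro z
      rw [Finset.prod_add]
      exact Finset.sum_congr rfl fun T _ => by simp
    calc (𝔼 z : (∀ k, W k) × (∀ k, W k), ∏ α ∈ A, (h (mixPoint α z.1 z.2) + 1))
        = 𝔼 z : (∀ k, W k) × (∀ k, W k),
            ∑ T ∈ A.powerset, ∏ α ∈ T, h (mixPoint α z.1 z.2) :=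
          Finset.expect_congr rfl fun z _ => h1 z
      _ = ∑ T ∈ A.powerset, Epat h T := Finset.expect_sum_comm _ _ _
  rw [hexp]
  set B : ℝ := (Epat h Finset.univ) ^ ((1:ℝ)/2^(Fintype.card κ)) with hBdef
  have hB0 : 0 ≤ B := Real.rpow_nonneg (Epat_univ_nonneg h) _
  have hterm : ∀ T ∈ A.powerset.erase ∅, Epat h T ≤ δ := by
    intro T hT
    have hTne : T ≠ ∅ := (Finset.mem_erase.1 hT).1
    have hcard : 1 ≤ T.card := Finset.card_pos.2 (Finset.nonempty_of_ne_empty hTne)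
    have h1 : Epat h T ≤ B ^ T.card :=
      (le_abs_self _).trans (Epat_le h Finset.univ T (by simp))
    have h2 : B ^ T.card ≤ δ ^ T.card := pow_le_pow_left₀ hB0 hbn _
    have h3 : δ ^ T.card ≤ δ ^ 1 := pow_le_pow_of_le_one hδ0 hδ1 hcard
    rw [pow_one] at h3
    exact h1.trans (h2.trans h3)
  have hmem : ∅ ∈ A.powerset := Finset.empty_mem_powerset _
  rw [← Finset.add_sum_erase _ _ hmem, Epat_empty]
  have hsum : ∑ T ∈ A.powerset.erase ∅, Epat h T ≤ (A.powerset.erase ∅).card • δ :=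
    Finset.sum_le_card_nsmul _ _ _ hterm
  have hcard2 : ((A.powerset.erase ∅).card : ℝ) ≤ 2 ^ A.card := by
    calc ((A.powerset.erase ∅).card : ℝ) ≤ (A.powerset.card : ℝ) := by
          exact_mod_cast Finset.card_le_card (Finset.erase_subset _ _)
      _ = 2 ^ A.card := by rw [Finset.card_powerset]; push_cast; ring
  have : ∑ T ∈ A.powerset.erase ∅, Epat h T ≤ 2 ^ A.card * δ := by
    refine hsum.trans ?_
    rw [nsmul_eq_mul]
    exact mul_le_mul_of_nonneg_right hcard2 hδ0
  linarith

end Expansion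


/-! ## the main estimate -/

section Main

set_option linter.unusedSectionVars false

variable {r : ℕ} (V : Fin (r + 1) → Type) [∀ i, Fintype (V i)] [∀ i, Nonempty (V i)]
  (ν : ∀ j : Fin (r + 1), EdgeSpace V j → ℝ)
  (g : Bool → ∀ j : Fin (r + 1), EdgeSpace V j → ℝ)

/-- the master space -/
abbrev Mst (V : Fin (r + 1) → Type) : Type :=
  (V 0 × V 0) × (EdgeSpace V 0 × EdgeSpace V 0)

/-- combined weight function for an edge `j ≠ 0` -/
def wfun (x : V 0 × V 0) (y : EdgeSpace V 0) (j : {i : Fin (r + 1) // i ≠ 0}) : ℝ :=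
  g false j (glue j x.1 y) * g true j (glue j x.2 y)

/-- the core integrand -/
def BtilCore (S : Finset {i : Fin (r + 1) // i ≠ 0}) (m : Mst V) : ℝ :=
  (∏ ω ∈ Omega S, (ν 0 (mixPoint ω m.2.1 m.2.2) - 1)) *
    ∏ k ∈ Finset.univ \ S, ∏ ω ∈ Omega S, wfun V g m.1 (mixPoint ω m.2.1 m.2.2) k

noncomputable def Btil (S : Finset {i : Fin (r + 1) // i ≠ 0}) : ℝ :=
  𝔼 m : Mst V, BtilCore V ν g S m

lemma glue_update (j : {i : Fin (r + 1) // i ≠ 0}) (x : V 0) (y : EdgeSpace V 0)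
    (t : V j) :
    glue (j : Fin (r + 1)) x (Function.update y j t) = glue (j : Fin (r + 1)) x y := by
  funext i
  unfold glue
  by_cases h : (i : Fin (r + 1)) = 0
  · rw [dif_pos h, dif_pos h]
  · rw [dif_neg h, dif_neg h]
    apply Function.update_of_ne
    intro hc
    exact i.2 (congrArg Subtype.val hc)

lemma expect_res_m1 (j : {i : Fin (r + 1) // i ≠ 0}) (H : Mst V → ℝ) :
    𝔼 m : Mst V, H m
      = 𝔼 m : Mst V, 𝔼 t : V j, H (m.1, (Function.update m.2.1 j t, m.2.2)) := by
  rw [expect_pair H,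
    expect_pair (fun m : Mst V => 𝔼 t : V j, H (m.1, (Function.update m.2.1 j t, m.2.2)))]
  exact Finset.expect_congr rfl fun x _ => expect_resample_fst j (fun z => H (x, z))

lemma expect_res_m2 (j : {i : Fin (r + 1) // i ≠ 0}) (H : Mst V → ℝ) :
    𝔼 m : Mst V, H m
      = 𝔼 m : Mst V, 𝔼 t : V j, H (m.1, (m.2.1, Function.update m.2.2 j t)) := by
  rw [expect_pair H,
    expect_pair (fun m : Mst V => 𝔼 t : V j, H (m.1, (m.2.1, Function.update m.2.2 j t)))]
  exact Finset.expect_congr rfl fun x _ => expect_resample_snd j (fun z => H (x, z))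

lemma Btil_step (S : Finset {i : Fin (r + 1) // i ≠ 0}) (j : {i : Fin (r + 1) // i ≠ 0})
    (hj : j ∉ S)
    (hg0 : ∀ ι (k : {i : Fin (r + 1) // i ≠ 0}) x, 0 ≤ g ι k x)
    {M : ℝ} (hM0 : 0 ≤ M)
    (hgM : ∀ ι (k : {i : Fin (r + 1) // i ≠ 0}) x, g ι k x ≤ M) :
    Btil V ν g S ^ 2
        ≤ (𝔼 m : Mst V, ∏ ω ∈ Omega S, wfun V g m.1 (mixPoint ω m.2.1 m.2.2) j)
          * (M ^ 2 ^ (S.card + 1) * Btil V ν g (insert j S))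
      ∧ 0 ≤ Btil V ν g (insert j S) := by
  classical
  set P : Mst V → ℝ :=
    fun m => ∏ ω ∈ Omega S, wfun V g m.1 (mixPoint ω m.2.1 m.2.2) j with hP
  set Rf : Mst V → ℝ := fun m =>
    (∏ ω ∈ Omega S, (ν 0 (mixPoint ω m.2.1 m.2.2) - 1)) *
      ∏ k ∈ Finset.univ \ insert j S, ∏ ω ∈ Omega S,
        wfun V g m.1 (mixPoint ω m.2.1 m.2.2) k with hRf
  have hdecomp : ∀ m, BtilCore V ν g S m = P m * Rf m := by
    intro m
    unfold BtilCore
    rw [hP, hRf]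
    dsimp only
    have hjmem : j ∈ Finset.univ \ S := by simp [hj]
    rw [← Finset.mul_prod_erase _ _ hjmem]
    have hset : (Finset.univ \ S).erase j = Finset.univ \ insert j S := by
      ext k
      simp only [Finset.mem_erase, Finset.mem_sdiff, Finset.mem_univ, true_and,
        Finset.mem_insert]
      tauto
    rw [hset]
    ring
  have hP0 : ∀ m, 0 ≤ P m :=
    fun m => Finset.prod_nonneg fun ω _ => mul_nonneg (hg0 _ _ _) (hg0 _ _ _)
  have hPupd1 : ∀ (m : Mst V) (t : V j),
      P (m.1, (Function.update m.2.1 j t, m.2.2)) = P m := by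
    intro m t
    rw [hP]
    dsimp only
    refine Finset.prod_congr rfl fun ω hω => ?_
    rw [mix_upd_left_ff (Omega_ff hω hj)]
    unfold wfun
    rw [glue_update, glue_update]
  set Q : Mst V → ℝ :=
    fun m => 𝔼 t : V j, Rf (m.1, (Function.update m.2.1 j t, m.2.2)) with hQ
  have hBPQ : Btil V ν g S = 𝔼 m : Mst V, P m * Q m := by
    unfold Btil
    calc 𝔼 m : Mst V, BtilCore V ν g S m = 𝔼 m : Mst V, P m * Rf m :=
          Finset.expect_congr rfl fun m _ => hdecomp m
      _ = 𝔼 m : Mst V, 𝔼 t : V j,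
            (P (m.1, (Function.update m.2.1 j t, m.2.2))
              * Rf (m.1, (Function.update m.2.1 j t, m.2.2))) :=
          expect_res_m1 V j (fun m => P m * Rf m)
      _ = 𝔼 m : Mst V, 𝔼 t : V j,
            P m * Rf (m.1, (Function.update m.2.1 j t, m.2.2)) := by
          refine Finset.expect_congr rfl fun m _ => ?_
          exact Finset.expect_congr rfl fun t _ => by rw [hPupd1 m t]
      _ = 𝔼 m : Mst V, P m * Q m := by
          refine Finset.expect_congr rfl fun m _ => ?_
          rw [hQ]
          dsimp only
          rw [Finset.mul_expect]
  have hcs : (𝔼 m : Mst V, P m * Q m) ^ 2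
      ≤ (𝔼 m : Mst V, P m) * (𝔼 m : Mst V, P m * Q m ^ 2) :=
    expect_weighted_cs P Q hP0
  have hPbd : ∀ m, P m ≤ M ^ 2 ^ (S.card + 1) := by
    intro m
    rw [hP]
    dsimp only
    calc ∏ ω ∈ Omega S, wfun V g m.1 (mixPoint ω m.2.1 m.2.2) j
        ≤ ∏ _ω ∈ Omega S, M ^ 2 := by
          refine Finset.prod_le_prod (fun ω _ => mul_nonneg (hg0 _ _ _) (hg0 _ _ _))
            (fun ω _ => ?_)
          rw [sq]
          exact mul_le_mul (hgM _ _ _) (hgM _ _ _) (hg0 _ _ _) hM0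
      _ = M ^ 2 ^ (S.card + 1) := by
          rw [Finset.prod_const, Omega_card, ← pow_mul]
          congr 1
          rw [pow_succ]
          ring
  have hQsq0 : (0:ℝ) ≤ 𝔼 m : Mst V, Q m ^ 2 :=
    Finset.expect_nonneg fun m _ => sq_nonneg _
  have hPQ2 : 𝔼 m : Mst V, P m * Q m ^ 2
      ≤ M ^ 2 ^ (S.card + 1) * (𝔼 m : Mst V, Q m ^ 2) := by
    rw [Finset.mul_expect]
    exact Finset.expect_le_expect fun m _ =>
      mul_le_mul_of_nonneg_right (hPbd m) (sq_nonneg _)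
  -- identification of 𝔼 Q² with Btil (insert j S)
  have hface1 : ∀ (m : Mst V) (t₀ t₁ : V j), ∀ ω ∈ Omega S,
      mixPoint ω (Function.update m.2.1 j t₀) (Function.update m.2.2 j t₁)
        = mixPoint ω (Function.update m.2.1 j t₀) m.2.2 :=
    fun m t₀ t₁ ω hω => mix_upd_right_ff (Omega_ff hω hj) _ _ _
  have hface2 : ∀ (m : Mst V) (t₀ t₁ : V j), ∀ ω ∈ Omega S,
      mixPoint (Function.update ω j true)
          (Function.update m.2.1 j t₀) (Function.update m.2.2 j t₁)
        = mixPoint ω (Function.update m.2.1 j t₁) m.2.2 := by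
    intro m t₀ t₁ ω hω
    rw [mix_upd_tt, mix_upd_left_ff (Omega_ff hω hj)]
  have hpt : ∀ (m : Mst V) (a b : V j),
      Rf (m.1, (Function.update m.2.1 j a, m.2.2))
          * Rf (m.1, (Function.update m.2.1 j b, m.2.2))
        = BtilCore V ν g (insert j S)
            (m.1, (Function.update m.2.1 j a, Function.update m.2.2 j b)) := by
    intro m a b
    have hRHS : BtilCore V ν g (insert j S)
        (m.1, (Function.update m.2.1 j a, Function.update m.2.2 j b))
      = ((∏ ω ∈ Omega S, (ν 0 (mixPoint ω (Function.update m.2.1 j a) m.2.2) - 1))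
          * ∏ ω ∈ Omega S, (ν 0 (mixPoint ω (Function.update m.2.1 j b) m.2.2) - 1))
        * ∏ k ∈ Finset.univ \ insert j S,
            ((∏ ω ∈ Omega S, wfun V g m.1 (mixPoint ω (Function.update m.2.1 j a) m.2.2) k)
              * ∏ ω ∈ Omega S,
                  wfun V g m.1 (mixPoint ω (Function.update m.2.1 j b) m.2.2) k) := by
      unfold BtilCore
      dsimp only
      congr 1
      · rw [Omega_insert_prod hj]
        congr 1
        · exact Finset.prod_congr rfl fun ω hω => by rw [hface1 m a b ω hω]
        · exact Finset.prod_congr rfl fun ω hω => by rw [hface2 m a b ω hω]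
      · refine Finset.prod_congr rfl fun k hk => ?_
        rw [Omega_insert_prod hj]
        congr 1
        · exact Finset.prod_congr rfl fun ω hω => by rw [hface1 m a b ω hω]
        · exact Finset.prod_congr rfl fun ω hω => by rw [hface2 m a b ω hω]
    rw [hRHS, hRf]
    dsimp only
    rw [Finset.prod_mul_distrib]
    ring
  have hQB : (𝔼 m : Mst V, Q m ^ 2) = Btil V ν g (insert j S) := by
    have hsq : ∀ m : Mst V, Q m ^ 2
        = 𝔼 a : V j, 𝔼 b : V j,
            BtilCore V ν g (insert j S)
              (m.1, (Function.update m.2.1 j a, Function.update m.2.2 j b)) := by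
      intro m
      rw [sq, hQ]
      dsimp only
      rw [Fintype.expect_mul_expect]
      refine Finset.expect_congr rfl fun a _ => ?_
      refine Finset.expect_congr rfl fun b _ => ?_
      exact hpt m a b
    calc (𝔼 m : Mst V, Q m ^ 2)
        = 𝔼 m : Mst V, 𝔼 a : V j, 𝔼 b : V j,
            BtilCore V ν g (insert j S)
              (m.1, (Function.update m.2.1 j a, Function.update m.2.2 j b)) :=
          Finset.expect_congr rfl fun m _ => hsq m
      _ = 𝔼 m : Mst V, 𝔼 a : V j,
            (fun m' : Mst V => 𝔼 b : V j, BtilCore V ν g (insert j S)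
              (m'.1, (m'.2.1, Function.update m'.2.2 j b)))
              (m.1, (Function.update m.2.1 j a, m.2.2)) := by
          refine Finset.expect_congr rfl fun m _ => ?_
          exact Finset.expect_congr rfl fun a _ => rfl
      _ = 𝔼 m : Mst V, 𝔼 b : V j, BtilCore V ν g (insert j S)
            (m.1, (m.2.1, Function.update m.2.2 j b)) :=
          (expect_res_m1 V j (fun m' : Mst V => 𝔼 b : V j, BtilCore V ν g (insert j S)
            (m'.1, (m'.2.1, Function.update m'.2.2 j b)))).symm
      _ = Btil V ν g (insert j S) := (expect_res_m2 V j _).symm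
  constructor
  · rw [hBPQ]
    refine hcs.trans ?_
    have hEP0 : (0:ℝ) ≤ 𝔼 m : Mst V, P m := Finset.expect_nonneg fun m _ => hP0 m
    refine mul_le_mul_of_nonneg_left ?_ hEP0
    rw [← hQB]
    exact hPQ2
  · rw [← hQB]
    exact hQsq0

/-- reconstruct a point of `V_{e₀}` from a point of `V_{e_j}` and a value in `V_j` -/
def recon (j : {i : Fin (r + 1) // i ≠ 0}) (z : EdgeSpace V (j : Fin (r + 1)))
    (t : V (j : Fin (r + 1))) : EdgeSpace V 0 :=
  fun i => if h : (i : Fin (r + 1)) = (j : Fin (r + 1)) then cast (congrArg V h).symm t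
    else z ⟨i, h⟩

def toMst (j : {i : Fin (r + 1) // i ≠ 0})
    (q : (EdgeSpace V (j : Fin (r + 1)) × EdgeSpace V (j : Fin (r + 1)))
        × (V (j : Fin (r + 1)) × V (j : Fin (r + 1)))) : Mst V :=
  ((q.1.1 ⟨0, Ne.symm j.2⟩, q.1.2 ⟨0, Ne.symm j.2⟩),
    (recon V j q.1.1 q.2.1, recon V j q.1.2 q.2.2))

def fromMst (j : {i : Fin (r + 1) // i ≠ 0}) (m : Mst V) :
    (EdgeSpace V (j : Fin (r + 1)) × EdgeSpace V (j : Fin (r + 1)))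
      × (V (j : Fin (r + 1)) × V (j : Fin (r + 1))) :=
  ((glue (j : Fin (r + 1)) m.1.1 m.2.1, glue (j : Fin (r + 1)) m.1.2 m.2.2),
    (m.2.1 j, m.2.2 j))

lemma glue_recon (j : {i : Fin (r + 1) // i ≠ 0}) (x : V 0)
    (z : EdgeSpace V (j : Fin (r + 1))) (t : V (j : Fin (r + 1)))
    (hx : x = z ⟨0, Ne.symm j.2⟩) :
    glue (j : Fin (r + 1)) x (recon V j z t) = z := by
  funext i
  unfold glue recon
  by_cases h : (i : Fin (r + 1)) = 0
  · rw [dif_pos h]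
    have hi : i = ⟨0, Ne.symm j.2⟩ := Subtype.ext h
    subst hi
    subst hx
    rfl
  · rw [dif_neg h, dif_neg i.2]

lemma recon_apply_j (j : {i : Fin (r + 1) // i ≠ 0}) (z : EdgeSpace V (j : Fin (r + 1)))
    (t : V (j : Fin (r + 1))) : recon V j z t j = t := by
  unfold recon
  rw [dif_pos rfl]
  exact eq_of_heq (cast_heq _ t)

lemma recon_glue (j : {i : Fin (r + 1) // i ≠ 0}) (x : V 0) (y : EdgeSpace V 0) :
    recon V j (glue (j : Fin (r + 1)) x y) (y j) = y := by
  funext i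
  unfold recon glue
  by_cases h : (i : Fin (r + 1)) = (j : Fin (r + 1))
  · rw [dif_pos h]
    have hi : i = j := Subtype.ext h
    subst hi
    rfl
  · rw [dif_neg h, dif_neg i.2]

lemma glue_apply_zero (j : {i : Fin (r + 1) // i ≠ 0}) (x : V 0) (y : EdgeSpace V 0) :
    glue (j : Fin (r + 1)) x y ⟨0, Ne.symm j.2⟩ = x := by
  unfold glue
  rw [dif_pos rfl]
  exact eq_of_heq (cast_heq _ x)

lemma toMst_bijective (j : {i : Fin (r + 1) // i ≠ 0}) :
    Function.Bijective (toMst V j) := by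
  have hli : Function.LeftInverse (fromMst V j) (toMst V j) := by
    intro q
    unfold fromMst toMst
    dsimp only
    rw [glue_recon V j _ _ _ rfl, glue_recon V j _ _ _ rfl, recon_apply_j, recon_apply_j]
  have hri : Function.RightInverse (fromMst V j) (toMst V j) := by
    intro m
    unfold fromMst toMst
    dsimp only
    rw [glue_apply_zero, glue_apply_zero, recon_glue, recon_glue]
  exact ⟨hli.injective, hri.surjective⟩

lemma expect_toMst (j : {i : Fin (r + 1) // i ≠ 0}) (F : Mst V → ℝ) :
    𝔼 m : Mst V, F m
      = 𝔼 q : (EdgeSpace V (j : Fin (r + 1)) × EdgeSpace V (j : Fin (r + 1)))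
          × (V (j : Fin (r + 1)) × V (j : Fin (r + 1))), F (toMst V j q) :=
  (Fintype.expect_bijective (toMst V j) (toMst_bijective V j) _ _ (fun q => rfl)).symm

/-- the transported pattern -/
def pat (j : {i : Fin (r + 1) // i ≠ 0}) (ι : Bool)
    (ω : {i : Fin (r + 1) // i ≠ 0} → Bool) : {i : Fin (r + 1) // i ≠ (j : Fin (r + 1))} → Bool :=
  fun i => if h : (i : Fin (r + 1)) = 0 then ι else ω ⟨i, h⟩

lemma key_point (j : {i : Fin (r + 1) // i ≠ 0})
    (z₀ z₁ : EdgeSpace V (j : Fin (r + 1))) (t₀ t₁ : V (j : Fin (r + 1)))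
    (ω : {i : Fin (r + 1) // i ≠ 0} → Bool) (ι : Bool) :
    glue (j : Fin (r + 1)) ((if ι then z₁ else z₀) ⟨0, Ne.symm j.2⟩)
        (mixPoint ω (recon V j z₀ t₀) (recon V j z₁ t₁))
      = mixPoint (pat j ι ω) z₀ z₁ := by
  funext i
  unfold glue mixPoint pat recon
  by_cases h : (i : Fin (r + 1)) = 0
  · rw [dif_pos h, dif_pos h]
    have hi : i = ⟨0, Ne.symm j.2⟩ := Subtype.ext h
    subst hi
    cases ι <;> rfl
  · rw [dif_neg h, dif_neg h]
    cases hω : ω ⟨i, h⟩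
    · simp only [Bool.false_eq_true, if_false]
      rw [dif_neg i.2]
    · simp only [if_true]
      rw [dif_neg i.2]

lemma pat_injOn (j : {i : Fin (r + 1) // i ≠ 0}) (S : Finset {i : Fin (r + 1) // i ≠ 0})
    (hj : j ∉ S) {ι ι' : Bool} {ω ω' : {i : Fin (r + 1) // i ≠ 0} → Bool}
    (hω : ω ∈ Omega S) (hω' : ω' ∈ Omega S) (heq : pat j ι ω = pat j ι' ω') :
    ι = ι' ∧ ω = ω' := by
  constructor
  · have := congrFun heq ⟨0, Ne.symm j.2⟩
    unfold pat at this
    rw [dif_pos rfl, dif_pos rfl] at this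
    exact this
  · funext i
    by_cases hij : i = j
    · subst hij
      rw [Omega_ff hω hj, Omega_ff hω' hj]
    · have hiv : (i : Fin (r + 1)) ≠ (j : Fin (r + 1)) := fun hc => hij (Subtype.ext hc)
      have := congrFun heq ⟨i, hiv⟩
      unfold pat at this
      rw [dif_neg i.2, dif_neg i.2] at this
      simpa using this

lemma card_I0 : Fintype.card {i : Fin (r + 1) // i ≠ 0} = r := by
  have h1 : Fintype.card {i : Fin (r + 1) // i ≠ 0}
      = Fintype.card (Fin (r + 1)) - Fintype.card {i : Fin (r + 1) // i = 0} := by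
    exact Fintype.card_subtype_compl _
  rw [h1, Fintype.card_subtype_eq, Fintype.card_fin]
  omega

lemma boxNorm_eq_Epat {κ : Type} [Fintype κ] [DecidableEq κ] {W : κ → Type}
    [∀ k, Fintype (W k)] (h : (∀ k, W k) → ℝ) :
    boxNorm h = (Epat h Finset.univ) ^ ((1:ℝ)/2^(Fintype.card κ)) := by
  unfold boxNorm Epat
  congr 1
  exact (expect_pair (fun z : (∀ k, W k) × (∀ k, W k) =>
    ∏ α ∈ Finset.univ, h (mixPoint α z.1 z.2))).symm

lemma expect_fst {A B : Type} [Fintype A] [Fintype B] [Nonempty B] (G : A → ℝ) :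
    𝔼 q : A × B, G q.1 = 𝔼 a : A, G a := by
  rw [expect_pair (fun q : A × B => G q.1)]
  simp

lemma transport_eq (j : {i : Fin (r + 1) // i ≠ 0}) (S : Finset {i : Fin (r + 1) // i ≠ 0})
    (ψf ψt : EdgeSpace V (j : Fin (r + 1)) → ℝ) :
    (𝔼 m : Mst V, ∏ ω ∈ Omega S,
        (ψf (glue (j : Fin (r + 1)) m.1.1 (mixPoint ω m.2.1 m.2.2))
          * ψt (glue (j : Fin (r + 1)) m.1.2 (mixPoint ω m.2.1 m.2.2))))
      = 𝔼 z : EdgeSpace V (j : Fin (r + 1)) × EdgeSpace V (j : Fin (r + 1)),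
          ∏ ω ∈ Omega S, (ψf (mixPoint (pat j false ω) z.1 z.2)
            * ψt (mixPoint (pat j true ω) z.1 z.2)) := by
  rw [expect_toMst V j]
  rw [← expect_fst (B := V (j : Fin (r + 1)) × V (j : Fin (r + 1)))
    (fun z : EdgeSpace V (j : Fin (r + 1)) × EdgeSpace V (j : Fin (r + 1)) =>
      ∏ ω ∈ Omega S, (ψf (mixPoint (pat j false ω) z.1 z.2)
        * ψt (mixPoint (pat j true ω) z.1 z.2)))]
  refine Finset.expect_congr rfl fun q _ => ?_
  refine Finset.prod_congr rfl fun ω _ => ?_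
  have hf := key_point V j q.1.1 q.1.2 q.2.1 q.2.2 ω false
  have ht := key_point V j q.1.1 q.1.2 q.2.1 q.2.2 ω true
  have hf' : glue (j : Fin (r + 1)) ((toMst V j q).1.1)
      (mixPoint ω ((toMst V j q).2.1) ((toMst V j q).2.2))
        = mixPoint (pat j false ω) q.1.1 q.1.2 := hf
  have ht' : glue (j : Fin (r + 1)) ((toMst V j q).1.2)
      (mixPoint ω ((toMst V j q).2.1) ((toMst V j q).2.2))
        = mixPoint (pat j true ω) q.1.1 q.1.2 := ht
  rw [hf', ht']

lemma D_bound (S : Finset {i : Fin (r + 1) // i ≠ 0}) (j : {i : Fin (r + 1) // i ≠ 0})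
    (hj : j ∉ S) {δ : ℝ} (hδ0 : 0 ≤ δ) (hδ1 : δ ≤ 1)
    (hν0 : ∀ x, 0 ≤ ν (j : Fin (r + 1)) x)
    (hg0 : ∀ ι x, 0 ≤ g ι (j : Fin (r + 1)) x)
    (hgb : ∀ ι, (∀ x, g ι (j : Fin (r + 1)) x ≤ 1) ∨
      (∀ x, g ι (j : Fin (r + 1)) x ≤ ν (j : Fin (r + 1)) x))
    (hbox : boxNorm (fun z : EdgeSpace V (j : Fin (r + 1)) => ν (j : Fin (r + 1)) z - 1) ≤ δ) :
    (𝔼 m : Mst V, ∏ ω ∈ Omega S, wfun V g m.1 (mixPoint ω m.2.1 m.2.2) j)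
      ≤ 1 + 2 ^ (2 ^ (r + 1)) * δ := by
  classical
  haveI hne : Nonempty {i : Fin (r + 1) // i ≠ (j : Fin (r + 1))} := ⟨⟨0, Ne.symm j.2⟩⟩
  set bS : Finset Bool :=
    Finset.univ.filter (fun ι => ¬ ∀ x, g ι (j : Fin (r + 1)) x ≤ 1) with hbS
  set ψ : Bool → EdgeSpace V (j : Fin (r + 1)) → ℝ :=
    fun ι x => if ι ∈ bS then ν (j : Fin (r + 1)) x else 1 with hψ
  have hψb : ∀ ι x, g ι (j : Fin (r + 1)) x ≤ ψ ι x := by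
    intro ι x
    rw [hψ]
    dsimp only
    by_cases hι : ι ∈ bS
    · rw [if_pos hι]
      have h2 : ¬ ∀ x, g ι (j : Fin (r + 1)) x ≤ 1 := (Finset.mem_filter.1 hι).2
      rcases hgb ι with h | h
      · exact absurd h h2
      · exact h x
    · rw [if_neg hι]
      have h2 : ∀ x, g ι (j : Fin (r + 1)) x ≤ 1 := by
        by_contra h3
        exact hι (Finset.mem_filter.2 ⟨Finset.mem_univ _, h3⟩)
      exact h2 x
  have hψ0 : ∀ ι x, 0 ≤ ψ ι x := by
    intro ι x
    rw [hψ]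
    dsimp only
    by_cases hι : ι ∈ bS
    · rw [if_pos hι]; exact hν0 x
    · rw [if_neg hι]; exact zero_le_one
  -- step 2 : bound by ψ's
  have hstep2 : (𝔼 m : Mst V, ∏ ω ∈ Omega S, wfun V g m.1 (mixPoint ω m.2.1 m.2.2) j)
      ≤ 𝔼 m : Mst V, ∏ ω ∈ Omega S,
          (ψ false (glue (j : Fin (r + 1)) m.1.1 (mixPoint ω m.2.1 m.2.2))
            * ψ true (glue (j : Fin (r + 1)) m.1.2 (mixPoint ω m.2.1 m.2.2))) := by
    refine Finset.expect_le_expect fun m _ => ?_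
    refine Finset.prod_le_prod (fun ω _ => mul_nonneg (hg0 _ _) (hg0 _ _)) (fun ω _ => ?_)
    unfold wfun
    exact mul_le_mul (hψb _ _) (hψb _ _) (hg0 _ _) (hψ0 _ _)
  -- set of transported patterns
  set A : Finset ({i : Fin (r + 1) // i ≠ (j : Fin (r + 1))} → Bool) :=
    bS.biUnion (fun ι => (Omega S).image (pat j ι)) with hA
  have hinj : ∀ ι : Bool, Set.InjOn (pat j ι) (Omega S : Set _) := by
    intro ι a ha b hb hab
    exact (pat_injOn j S hj ha hb hab).2
  -- pointwise reindexing
  have hreidx : ∀ z : EdgeSpace V (j : Fin (r + 1)) × EdgeSpace V (j : Fin (r + 1)),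
      (∏ ω ∈ Omega S, (ψ false (mixPoint (pat j false ω) z.1 z.2)
          * ψ true (mixPoint (pat j true ω) z.1 z.2)))
        = ∏ α ∈ A, ν (j : Fin (r + 1)) (mixPoint α z.1 z.2) := by
    intro z
    rw [Finset.prod_mul_distrib]
    have h1 : ∀ ι : Bool, (∏ ω ∈ Omega S, ψ ι (mixPoint (pat j ι ω) z.1 z.2))
        = ∏ α ∈ (if ι ∈ bS then (Omega S).image (pat j ι) else ∅),
            ν (j : Fin (r + 1)) (mixPoint α z.1 z.2) := by
      intro ι
      by_cases hι : ι ∈ bS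
      · rw [if_pos hι, Finset.prod_image (hinj ι)]
        refine Finset.prod_congr rfl fun ω _ => ?_
        rw [hψ]
        dsimp only
        rw [if_pos hι]
      · rw [if_neg hι]
        rw [Finset.prod_empty]
        refine Finset.prod_eq_one fun ω _ => ?_
        rw [hψ]
        dsimp only
        rw [if_neg hι]
    rw [h1 false, h1 true]
    have hdisj : Disjoint
        (if false ∈ bS then (Omega S).image (pat j false) else ∅)
        (if true ∈ bS then (Omega S).image (pat j true) else ∅) := by
      by_cases h0 : false ∈ bS <;> by_cases h1t : true ∈ bS <;>
        simp only [h0, h1t, if_true, if_false, Finset.disjoint_empty_left,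
          Finset.disjoint_empty_right]
      rw [Finset.disjoint_left]
      rintro α hα hα'
      rcases Finset.mem_image.1 hα with ⟨ω, hω, rfl⟩
      rcases Finset.mem_image.1 hα' with ⟨ω', hω', heq⟩
      exact absurd (pat_injOn j S hj hω' hω heq).1 (by simp)
    rw [← Finset.prod_union hdisj]
    have hsets : ((if false ∈ bS then (Omega S).image (pat j false) else ∅)
        ∪ (if true ∈ bS then (Omega S).image (pat j true) else ∅)) = A := by
      rw [hA]
      ext α
      simp only [Finset.mem_biUnion, Finset.mem_union]
      constructor
      · rintro (hα | hα)
        · by_cases h0 : false ∈ bS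
          · rw [if_pos h0] at hα
            exact ⟨false, h0, hα⟩
          · rw [if_neg h0] at hα
            exact absurd hα (Finset.notMem_empty _)
        · by_cases h1t : true ∈ bS
          · rw [if_pos h1t] at hα
            exact ⟨true, h1t, hα⟩
          · rw [if_neg h1t] at hα
            exact absurd hα (Finset.notMem_empty _)
      · rintro ⟨ι, hι, hα⟩
        cases ι
        · left; rw [if_pos hι]; exact hα
        · right; rw [if_pos hι]; exact hα
    rw [hsets]
  -- expansion bound
  have hbn : (Epat (fun z : EdgeSpace V (j : Fin (r + 1)) => ν (j : Fin (r + 1)) z - 1)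
      Finset.univ) ^ ((1:ℝ)/2^(Fintype.card {i : Fin (r + 1) // i ≠ (j : Fin (r + 1))})) ≤ δ := by
    rw [← boxNorm_eq_Epat]
    exact hbox
  have hexp := expect_prod_one_add_le
    (fun z : EdgeSpace V (j : Fin (r + 1)) => ν (j : Fin (r + 1)) z - 1) A hδ0 hδ1 hbn
  have hid : (𝔼 z : EdgeSpace V (j : Fin (r + 1)) × EdgeSpace V (j : Fin (r + 1)),
        ∏ α ∈ A, ν (j : Fin (r + 1)) (mixPoint α z.1 z.2))
      ≤ 1 + 2 ^ A.card * δ := by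
    refine le_trans (le_of_eq ?_) hexp
    refine Finset.expect_congr rfl fun z _ => Finset.prod_congr rfl fun α _ => by ring
  -- card bound
  have hcardA : A.card ≤ 2 ^ (r + 1) := by
    calc A.card ≤ ∑ ι ∈ bS, ((Omega S).image (pat j ι)).card := Finset.card_biUnion_le
      _ ≤ ∑ _ι ∈ bS, 2 ^ S.card := by
          refine Finset.sum_le_sum fun ι _ => ?_
          calc ((Omega S).image (pat j ι)).card ≤ (Omega S).card := Finset.card_image_le
            _ = 2 ^ S.card := Omega_card
      _ ≤ 2 * 2 ^ S.card := by
          rw [Finset.sum_const, smul_eq_mul]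
          have : bS.card ≤ 2 := by
            calc bS.card ≤ (Finset.univ : Finset Bool).card :=
                  Finset.card_le_card (Finset.filter_subset _ _)
              _ = 2 := by simp
          exact Nat.mul_le_mul_right _ this
      _ ≤ 2 ^ (r + 1) := by
          rw [pow_succ]
          have hS : S.card ≤ r := by
            have := Finset.card_le_univ S
            rwa [card_I0] at this
          calc 2 * 2 ^ S.card = 2 ^ S.card * 2 := by ring
            _ ≤ 2 ^ r * 2 := by
                exact Nat.mul_le_mul_right _ (Nat.pow_le_pow_right (by norm_num) hS)
  have hfinal : (1:ℝ) + 2 ^ A.card * δ ≤ 1 + 2 ^ (2 ^ (r + 1)) * δ := by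
    have h2 : (2:ℝ) ^ A.card ≤ 2 ^ (2 ^ (r + 1)) :=
      pow_le_pow_right₀ (by norm_num) hcardA
    linarith [mul_le_mul_of_nonneg_right h2 hδ0]
  refine hstep2.trans ?_
  rw [transport_eq V j S (ψ false) (ψ true)]
  calc (𝔼 z : EdgeSpace V (j : Fin (r + 1)) × EdgeSpace V (j : Fin (r + 1)),
        ∏ ω ∈ Omega S, (ψ false (mixPoint (pat j false ω) z.1 z.2)
          * ψ true (mixPoint (pat j true ω) z.1 z.2)))
      = 𝔼 z : EdgeSpace V (j : Fin (r + 1)) × EdgeSpace V (j : Fin (r + 1)),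
          ∏ α ∈ A, ν (j : Fin (r + 1)) (mixPoint α z.1 z.2) :=
        Finset.expect_congr rfl fun z _ => hreidx z
    _ ≤ 1 + 2 ^ A.card * δ := hid
    _ ≤ 1 + 2 ^ (2 ^ (r + 1)) * δ := hfinal

lemma Omega_univ : Omega (Finset.univ : Finset {i : Fin (r + 1) // i ≠ 0})
    = (Finset.univ : Finset ({i : Fin (r + 1) // i ≠ 0} → Bool)) := by
  ext ω
  simp [mem_Omega]

lemma expect_snd {A B : Type} [Fintype A] [Fintype B] [Nonempty A] (G : B → ℝ) :
    𝔼 q : A × B, G q.2 = 𝔼 b : B, G b := by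
  rw [expect_pair (fun q : A × B => G q.2)]
  simp

lemma Btil_univ_eq_Epat :
    Btil V ν g Finset.univ
      = Epat (fun z : EdgeSpace V 0 => ν 0 z - 1) Finset.univ := by
  unfold Btil Epat
  have h1 : ∀ m : Mst V, BtilCore V ν g Finset.univ m
      = ∏ ω ∈ Omega (Finset.univ : Finset {i : Fin (r + 1) // i ≠ 0}),
          (ν 0 (mixPoint ω m.2.1 m.2.2) - 1) := by
    intro m
    unfold BtilCore
    rw [Finset.sdiff_self, Finset.prod_empty, mul_one]
  calc 𝔼 m : Mst V, BtilCore V ν g Finset.univ m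
      = 𝔼 m : Mst V, ∏ ω ∈ Omega (Finset.univ : Finset {i : Fin (r + 1) // i ≠ 0}),
          (ν 0 (mixPoint ω m.2.1 m.2.2) - 1) :=
        Finset.expect_congr rfl fun m _ => h1 m
    _ = 𝔼 z : EdgeSpace V 0 × EdgeSpace V 0,
          ∏ ω ∈ Omega (Finset.univ : Finset {i : Fin (r + 1) // i ≠ 0}),
            (ν 0 (mixPoint ω z.1 z.2) - 1) :=
        expect_snd (fun z : EdgeSpace V 0 × EdgeSpace V 0 =>
          ∏ ω ∈ Omega (Finset.univ : Finset {i : Fin (r + 1) // i ≠ 0}),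
            (ν 0 (mixPoint ω z.1 z.2) - 1))
    _ = 𝔼 z : EdgeSpace V 0 × EdgeSpace V 0,
          ∏ ω ∈ (Finset.univ : Finset ({i : Fin (r + 1) // i ≠ 0} → Bool)),
            (ν 0 (mixPoint ω z.1 z.2) - 1) := by rw [Omega_univ]

lemma Btil_empty_eq :
    Btil V ν g ∅
      = 𝔼 x₀ : V 0, 𝔼 x₁ : V 0, 𝔼 y : EdgeSpace V 0,
          (ν 0 y - 1) * ∏ ι : Bool, ∏ j : {j : Fin (r + 1) // j ≠ 0},
            g ι j (glue (j : Fin (r + 1)) (if ι then x₁ else x₀) y) := by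
  unfold Btil
  have h1 : ∀ m : Mst V, BtilCore V ν g ∅ m
      = (ν 0 m.2.1 - 1) * ∏ ι : Bool, ∏ j : {j : Fin (r + 1) // j ≠ 0},
          g ι j (glue (j : Fin (r + 1)) (if ι then m.1.2 else m.1.1) m.2.1) := by
    intro m
    unfold BtilCore
    simp only [Omega_empty, Finset.prod_singleton]
    have hmix : mixPoint (fun _ => false) m.2.1 m.2.2 = m.2.1 := rfl
    simp only [hmix]
    rw [Finset.sdiff_empty]
    congr 1
    rw [Fintype.prod_bool]
    unfold wfun
    rw [Finset.prod_mul_distrib]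
    rw [mul_comm]
    rfl
  calc 𝔼 m : Mst V, BtilCore V ν g ∅ m
      = 𝔼 m : Mst V, (ν 0 m.2.1 - 1) * ∏ ι : Bool, ∏ j : {j : Fin (r + 1) // j ≠ 0},
          g ι j (glue (j : Fin (r + 1)) (if ι then m.1.2 else m.1.1) m.2.1) :=
        Finset.expect_congr rfl fun m _ => h1 m
    _ = 𝔼 xp : V 0 × V 0, 𝔼 zp : EdgeSpace V 0 × EdgeSpace V 0,
          (ν 0 zp.1 - 1) * ∏ ι : Bool, ∏ j : {j : Fin (r + 1) // j ≠ 0},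
            g ι j (glue (j : Fin (r + 1)) (if ι then xp.2 else xp.1) zp.1) :=
        expect_pair _
    _ = 𝔼 x₀ : V 0, 𝔼 x₁ : V 0, 𝔼 y : EdgeSpace V 0,
          (ν 0 y - 1) * ∏ ι : Bool, ∏ j : {j : Fin (r + 1) // j ≠ 0},
            g ι j (glue (j : Fin (r + 1)) (if ι then x₁ else x₀) y) := by
        rw [expect_pair (fun xp : V 0 × V 0 =>
          𝔼 zp : EdgeSpace V 0 × EdgeSpace V 0,
            (ν 0 zp.1 - 1) * ∏ ι : Bool, ∏ j : {j : Fin (r + 1) // j ≠ 0},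
              g ι j (glue (j : Fin (r + 1)) (if ι then xp.2 else xp.1) zp.1))]
        refine Finset.expect_congr rfl fun x₀ _ => ?_
        refine Finset.expect_congr rfl fun x₁ _ => ?_
        exact expect_fst (fun y : EdgeSpace V 0 =>
          (ν 0 y - 1) * ∏ ι : Bool, ∏ j : {j : Fin (r + 1) // j ≠ 0},
            g ι j (glue (j : Fin (r + 1)) (if ι then x₁ else x₀) y))

lemma Btil_univ_nonneg (hne : Nonempty {i : Fin (r + 1) // i ≠ 0})
    (hg0 : ∀ ι (k : {i : Fin (r + 1) // i ≠ 0}) x, 0 ≤ g ι (k : Fin (r + 1)) x)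
    {M : ℝ} (hM0 : 0 ≤ M)
    (hgM : ∀ ι (k : {i : Fin (r + 1) // i ≠ 0}) x, g ι (k : Fin (r + 1)) x ≤ M) :
    0 ≤ Btil V ν g Finset.univ := by
  obtain ⟨j⟩ := hne
  have h := (Btil_step V ν g (Finset.univ.erase j) j (Finset.notMem_erase _ _)
    hg0 hM0 hgM).2
  rwa [Finset.insert_erase (Finset.mem_univ j)] at h

lemma Btil_chain (ε M : ℝ) (hε : 0 < ε) (hM1 : 1 ≤ M)
    (hg0 : ∀ ι (k : {i : Fin (r + 1) // i ≠ 0}) x, 0 ≤ g ι (k : Fin (r + 1)) x)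
    (hgM : ∀ ι (k : {i : Fin (r + 1) // i ≠ 0}) x, g ι (k : Fin (r + 1)) x ≤ M)
    (hD : ∀ (S : Finset {i : Fin (r + 1) // i ≠ 0}) (j : {i : Fin (r + 1) // i ≠ 0}),
      j ∉ S → (𝔼 m : Mst V, ∏ ω ∈ Omega S, wfun V g m.1 (mixPoint ω m.2.1 m.2.2) j)
        ≤ 1 + ε)
    (hU0 : 0 ≤ Btil V ν g Finset.univ) :
    ∀ (n : ℕ) (S : Finset {i : Fin (r + 1) // i ≠ 0}), (Finset.univ \ S).card = n →
      |Btil V ν g S| ≤ (1 + ε) * M ^ (n * 2 ^ S.card)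
        * (Btil V ν g Finset.univ) ^ ((1:ℝ)/2^n) := by
  have hM0 : (0:ℝ) ≤ M := le_trans zero_le_one hM1
  intro n
  induction n with
  | zero =>
    intro S hS
    have hSuniv : S = Finset.univ := by
      have h1 : Finset.univ \ S = ∅ := Finset.card_eq_zero.1 hS
      have h2 : (Finset.univ : Finset {i : Fin (r + 1) // i ≠ 0}) ⊆ S :=
        Finset.sdiff_eq_empty_iff_subset.1 h1
      exact Finset.eq_univ_of_forall fun x => h2 (Finset.mem_univ x)
    subst hSuniv
    rw [abs_of_nonneg hU0]
    have h3 : (Btil V ν g Finset.univ) ^ ((1:ℝ)/2^(0:ℕ)) = Btil V ν g Finset.univ := by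
      norm_num
    rw [h3]
    have h4 : (1:ℝ) ≤ (1 + ε) * M ^ (0 * 2 ^ (Finset.univ : Finset {i : Fin (r + 1) // i ≠ 0}).card) := by
      rw [zero_mul, pow_zero, mul_one]
      linarith
    nlinarith [hU0]
  | succ n ih =>
    intro S hS
    have hne : (Finset.univ \ S).Nonempty := by
      rw [← Finset.card_pos, hS]
      omega
    obtain ⟨j, hjmem⟩ := hne
    have hj : j ∉ S := (Finset.mem_sdiff.1 hjmem).2
    have hstep := Btil_step V ν g S j hj hg0 hM0 hgM
    have hcard' : (Finset.univ \ insert j S).card = n := by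
      have h1 : Finset.univ \ insert j S = (Finset.univ \ S).erase j := by
        ext k
        simp only [Finset.mem_sdiff, Finset.mem_univ, true_and, Finset.mem_erase,
          Finset.mem_insert]
        tauto
      rw [h1, Finset.card_erase_of_mem hjmem, hS]
      omega
    have hih := ih (insert j S) hcard'
    have hU0' : 0 ≤ Btil V ν g (insert j S) := hstep.2
    rw [abs_of_nonneg hU0'] at hih
    have hDS := hD S j hj
    have hD0 : (0:ℝ) ≤ 𝔼 m : Mst V, ∏ ω ∈ Omega S, wfun V g m.1 (mixPoint ω m.2.1 m.2.2) j :=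
      Finset.expect_nonneg fun m _ =>
        Finset.prod_nonneg fun ω _ => mul_nonneg (hg0 _ _ _) (hg0 _ _ _)
    set U : ℝ := Btil V ν g Finset.univ with hU
    set cS : ℕ := S.card with hcS
    have hcins : (insert j S).card = cS + 1 := Finset.card_insert_of_notMem hj
    -- target
    set T : ℝ := (1 + ε) * M ^ ((n+1) * 2 ^ cS) * U ^ ((1:ℝ)/2^(n+1)) with hT
    have hT0 : 0 ≤ T := by
      refine mul_nonneg (mul_nonneg (by linarith) (pow_nonneg hM0 _)) ?_
      exact Real.rpow_nonneg hU0 _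
    have hrpow : (U ^ ((1:ℝ)/2^(n+1))) ^ (2:ℕ) = U ^ ((1:ℝ)/2^n) := by
      rw [← Real.rpow_natCast (U ^ ((1:ℝ)/2^(n+1))) 2, ← Real.rpow_mul hU0]
      congr 1
      push_cast
      field_simp
      ring
    have hT2 : T ^ 2 = (1 + ε) * ((1 + ε) * M ^ ((n+1) * 2 ^ (cS+1)) * U ^ ((1:ℝ)/2^n)) := by
      have hexp2 : ((n+1) * 2 ^ cS) * 2 = (n+1) * 2 ^ (cS+1) := by
        rw [pow_succ]
        ring
      calc T ^ 2 = (1 + ε)^2 * (M ^ ((n+1) * 2 ^ cS))^2 * (U ^ ((1:ℝ)/2^(n+1)))^(2:ℕ) := by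
            rw [hT]; ring
        _ = (1 + ε) * ((1 + ε) * M ^ ((n+1) * 2 ^ (cS+1)) * U ^ ((1:ℝ)/2^n)) := by
            rw [hrpow, ← pow_mul, hexp2]
            ring
    have hsq : Btil V ν g S ^ 2 ≤ T ^ 2 := by
      refine hstep.1.trans ?_
      rw [hT2]
      have hXnn : (0:ℝ) ≤ M ^ 2 ^ (cS + 1) * Btil V ν g (insert j S) :=
        mul_nonneg (pow_nonneg hM0 _) hU0'
      have h5 : (𝔼 m : Mst V, ∏ ω ∈ Omega S, wfun V g m.1 (mixPoint ω m.2.1 m.2.2) j)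
          * (M ^ 2 ^ (cS + 1) * Btil V ν g (insert j S))
            ≤ (1 + ε) * (M ^ 2 ^ (cS + 1) * Btil V ν g (insert j S)) :=
        mul_le_mul_of_nonneg_right hDS hXnn
      refine h5.trans ?_
      refine mul_le_mul_of_nonneg_left ?_ (by linarith)
      calc M ^ 2 ^ (cS + 1) * Btil V ν g (insert j S)
          ≤ M ^ 2 ^ (cS + 1) * ((1 + ε) * M ^ (n * 2 ^ (cS+1)) * U ^ ((1:ℝ)/2^n)) := by
            refine mul_le_mul_of_nonneg_left ?_ (pow_nonneg hM0 _)
            rw [← hcins]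
            exact hih
        _ = (1 + ε) * M ^ ((n+1) * 2 ^ (cS+1)) * U ^ ((1:ℝ)/2^n) := by
            rw [show (n+1) * 2 ^ (cS+1) = 2 ^ (cS+1) + n * 2 ^ (cS+1) by ring, pow_add]
            ring
    calc |Btil V ν g S| = Real.sqrt (Btil V ν g S ^ 2) := (Real.sqrt_sq_eq_abs _).symm
      _ ≤ Real.sqrt (T ^ 2) := Real.sqrt_le_sqrt hsq
      _ = T := Real.sqrt_sq hT0

end Main


/-- The strong linear forms estimate under a Gowers uniformity hypothesis. -/
theorem strong_linear_forms_gowers (r : ℕ) (hr : 2 ≤ r) (ε : ℝ) (hε : 0 < ε) :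
    ∃ δ : ℝ, 0 < δ ∧
      ∀ (V : Fin (r + 1) → Type) [∀ i, Fintype (V i)] [∀ i, Nonempty (V i)]
        (ν : ∀ j : Fin (r + 1), EdgeSpace V j → ℝ),
        (∀ j x, 0 ≤ ν j x) → 1 ≤ hypSup V ν →
        (∀ j : Fin (r + 1), j ≠ 0 → boxNorm (fun z : EdgeSpace V j => ν j z - 1) ≤ δ) →
        ∀ g : Bool → ∀ j : Fin (r + 1), EdgeSpace V j → ℝ,
        (∀ ι (j : Fin (r + 1)), j ≠ 0 → ∀ x, 0 ≤ g ι j x) →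
        (∀ ι (j : Fin (r + 1)), j ≠ 0 →
          (∀ x, g ι j x ≤ 1) ∨ (∀ x, g ι j x ≤ ν j x)) →
        |𝔼 x₀ : V 0, 𝔼 x₁ : V 0, 𝔼 y : EdgeSpace V 0,
            (ν 0 y - 1) * ∏ ι : Bool, ∏ j : {j : Fin (r + 1) // j ≠ 0},
              g ι j (glue (j : Fin (r + 1)) (if ι then x₁ else x₀) y)|
          ≤ (1 + ε) * boxNorm (fun z : EdgeSpace V 0 => ν 0 z - 1) * hypSup V ν ^ r := by

  classical
  set δ : ℝ := min 1 (ε / 2 ^ (2 ^ (r + 1))) with hδdef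
  have hδpos : 0 < δ := lt_min one_pos (div_pos hε (pow_pos two_pos _))
  refine ⟨δ, hδpos, ?_⟩
  intro V _ _ ν hν0 hM1 hboxj g hg0' hgb'
  set M : ℝ := hypSup V ν with hMdef
  have hM0 : (0:ℝ) ≤ M := le_trans zero_le_one hM1
  have hsup : ∀ (jj : Fin (r + 1)) (x : EdgeSpace V jj), ν jj x ≤ M := by
    intro jj x
    have h1 : ν jj x ≤ ⨆ y : EdgeSpace V jj, ν jj y :=
      le_ciSup (Set.Finite.bddAbove (Set.finite_range _)) x
    have h2 : (⨆ y : EdgeSpace V jj, ν jj y)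
        ≤ ⨆ j' : Fin (r + 1), ⨆ y : EdgeSpace V j', ν j' y :=
      le_ciSup (f := fun j' : Fin (r + 1) => ⨆ y : EdgeSpace V j', ν j' y)
        (Set.Finite.bddAbove (Set.finite_range _)) jj
    exact h1.trans h2
  have hg0 : ∀ ι (k : {i : Fin (r + 1) // i ≠ 0}) x, 0 ≤ g ι (k : Fin (r + 1)) x :=
    fun ι k x => hg0' ι (k : Fin (r + 1)) k.2 x
  have hgM : ∀ ι (k : {i : Fin (r + 1) // i ≠ 0}) x, g ι (k : Fin (r + 1)) x ≤ M := by
    intro ι k x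
    rcases hgb' ι (k : Fin (r + 1)) k.2 with h | h
    · exact (h x).trans hM1
    · exact (h x).trans (hsup _ x)
  have hδ1 : δ ≤ 1 := min_le_left _ _
  have hδ0 : (0:ℝ) ≤ δ := le_of_lt hδpos
  have hδε : 2 ^ (2 ^ (r + 1)) * δ ≤ ε := by
    have h1 : δ ≤ ε / 2 ^ (2 ^ (r + 1)) := min_le_right _ _
    have h2 : (0:ℝ) < 2 ^ (2 ^ (r + 1)) := pow_pos two_pos _
    calc (2:ℝ) ^ (2 ^ (r + 1)) * δ ≤ 2 ^ (2 ^ (r + 1)) * (ε / 2 ^ (2 ^ (r + 1))) :=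
          mul_le_mul_of_nonneg_left h1 (le_of_lt h2)
      _ = ε := by field_simp
  have hD : ∀ (S : Finset {i : Fin (r + 1) // i ≠ 0}) (j : {i : Fin (r + 1) // i ≠ 0}),
      j ∉ S → (𝔼 m : Mst V, ∏ ω ∈ Omega S, wfun V g m.1 (mixPoint ω m.2.1 m.2.2) j)
        ≤ 1 + ε := by
    intro S j hj
    have h1 := D_bound V ν g S j hj hδ0 hδ1 (hν0 (j : Fin (r + 1)))
      (fun ι x => hg0 ι j x) (fun ι => hgb' ι (j : Fin (r + 1)) j.2)
      (hboxj (j : Fin (r + 1)) j.2)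
    refine h1.trans ?_
    linarith
  have hne : Nonempty {i : Fin (r + 1) // i ≠ 0} := by
    refine ⟨⟨⟨1, by omega⟩, ?_⟩⟩
    intro h
    have := congrArg Fin.val h
    simp at this
  have hU0 := Btil_univ_nonneg V ν g hne hg0 hM0 hgM
  have hchain := Btil_chain V ν g ε M hε hM1 hg0 hgM hD hU0 r ∅ (by
    rw [Finset.sdiff_empty, Finset.card_univ, card_I0])
  have hbox0 : (Btil V ν g Finset.univ) ^ ((1:ℝ)/2^r)
      = boxNorm (fun z : EdgeSpace V 0 => ν 0 z - 1) := by
    rw [boxNorm_eq_Epat, ← Btil_univ_eq_Epat, card_I0]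
  have hgoal : |𝔼 x₀ : V 0, 𝔼 x₁ : V 0, 𝔼 y : EdgeSpace V 0,
      (ν 0 y - 1) * ∏ ι : Bool, ∏ j : {j : Fin (r + 1) // j ≠ 0},
        g ι j (glue (j : Fin (r + 1)) (if ι then x₁ else x₀) y)|
      = |Btil V ν g ∅| := by
    rw [Btil_empty_eq]
  rw [hgoal]
  refine hchain.trans ?_
  rw [hbox0]
  simp only [Finset.card_empty, pow_zero, mul_one]
  exact le_of_eq (by ring)
end

section
/- Fix an integer r ≥ 2. For every ε > 0 there exists δ > 0 such that the following holds. Let ν be a weighted hypergraph on nonempty finite sets V₀, …, V_r with ‖ν‖_∞ ≥ 1, and suppose ‖ν_e − 1‖_{U^e} ≤ δ for every e ∈ H ∖ {e₀}. For each e ∈ H ∖ {e₀}, let g_e : V_e → ℝ_{≥0} be a function such that either g_e ≤ 1 pointwise or g_e ≤ ν_e pointwise. Then | 𝔼[ (ν_{e₀}(x_{e₀}) − 1) · ∏_{e∈H∖{e₀}} g_e(x_e) | x_J ∈ V_J ] | ≤ (1 + ε) · ‖ν_{e₀} − 1‖_{U^{e₀}} · ‖ν‖_∞^{r/2}. -/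
open Finset
open scoped BigOperators

/-!
Write a pair of points `x⁰, x¹ ∈ V_J` coordinatewise as `z`, and `x^(ω)` for the vertices of the
box they span. Each `g_j`, `j ≠ 0`, ignores the coordinate `j`, so Cauchy–Schwarz in that
coordinate removes `g_j` at the price of doubling the remaining product in the direction `j`.
After `r` such steps the factor `ν_{e₀} - 1` is averaged over the whole box of `e₀`, which is
`‖ν_{e₀} - 1‖^{2^r}`, while every step contributes the average of a product of `g_j²` over a face
of dimension `s`. Since `g_j² ≤ ‖ν‖_∞ · h` with `h = 1` or `h = ν_{e_j}`, that average is at most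
`‖ν‖_∞^{2^s}` times the average of `h` over the face, and the latter is `1 + O(δ)`: expand
`ν_{e_j} = 1 + (ν_{e_j} - 1)` and bound every term by the Gowers–Cauchy–Schwarz inequality.
The powers of `‖ν‖_∞` add up to `r · 2^{r-1}`, i.e. to `‖ν‖_∞^{r/2}` after taking `2^r`-th roots.
-/

namespace StrongLinearForms

open Function

variable {ι : Type} [DecidableEq ι] {β : ι → Type}

section Pairs

def swapAt (u : ι) (z : ∀ i, β i × β i) : ∀ i, β i × β i := update z u (z u).swap

def IgnoresSndAt (u : ι) (Q : (∀ i, β i × β i) → ℝ) : Prop :=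
  ∀ z (a b b' : β u), Q (update z u (a, b)) = Q (update z u (a, b'))

def IgnoresFstAt (u : ι) (Q : (∀ i, β i × β i) → ℝ) : Prop :=
  ∀ z (a a' b : β u), Q (update z u (a, b)) = Q (update z u (a', b))

def joinAt (u : ι) (w : β u × β u) (y : ∀ j : {j // j ≠ u}, β j × β j) : ∀ i, β i × β i :=
  (Equiv.piSplitAt u _).symm (w, y)

lemma update_joinAt (u : ι) (w w' : β u × β u) (y : ∀ j : {j // j ≠ u}, β j × β j) :
    update (joinAt u w y) u w' = joinAt u w' y := by
  funext i
  by_cases h : i = u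
  · subst h; simp [joinAt]
  · simp [joinAt, h]

lemma swapAt_joinAt (u : ι) (w : β u × β u) (y : ∀ j : {j // j ≠ u}, β j × β j) :
    swapAt u (joinAt u w y) = joinAt u w.swap y := by
  rw [swapAt, update_joinAt]
  simp [joinAt]

lemma IgnoresSndAt.joinAt_eq {u : ι} {Q : (∀ i, β i × β i) → ℝ} (hQ : IgnoresSndAt u Q)
    (a b : β u) (y : ∀ j : {j // j ≠ u}, β j × β j) :
    Q (joinAt u (a, b) y) = Q (joinAt u (a, a) y) := by
  rw [← update_joinAt u (a, a) (a, b), hQ, update_joinAt]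

lemma IgnoresFstAt.joinAt_eq {u : ι} {Q : (∀ i, β i × β i) → ℝ} (hQ : IgnoresFstAt u Q)
    (a b : β u) (y : ∀ j : {j // j ≠ u}, β j × β j) :
    Q (joinAt u (a, b) y) = Q (joinAt u (b, b) y) := by
  rw [← update_joinAt u (b, b) (a, b), hQ, update_joinAt]

variable [Fintype ι] [∀ i, Fintype (β i)]

lemma expect_pair (Θ : (∀ i, β i) → (∀ i, β i) → ℝ) :
    𝔼 z : ∀ i, β i × β i, Θ (fun i => (z i).1) (fun i => (z i).2) = 𝔼 x, 𝔼 y, Θ x y := by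
  rw [Fintype.expect_equiv (Equiv.arrowProdEquivProdArrow ι β β)
    (fun z => Θ (fun i => (z i).1) (fun i => (z i).2)) (fun p => Θ p.1 p.2) (fun _ => rfl),
    ← Finset.univ_product_univ, Finset.expect_product]

lemma expect_eq_expect_joinAt (u : ι) (F : (∀ i, β i × β i) → ℝ) :
    𝔼 z, F z = 𝔼 y : ∀ j : {j // j ≠ u}, β j × β j, 𝔼 a, 𝔼 b, F (joinAt u (a, b) y) := by
  rw [Fintype.expect_equiv (Equiv.piSplitAt u _) F (fun p => F (joinAt u p.1 p.2))
      (fun z => congrArg F ((Equiv.piSplitAt u _).symm_apply_apply z).symm),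
    ← Finset.univ_product_univ, Finset.expect_product, Finset.expect_comm,
    ← Finset.univ_product_univ]
  refine Finset.expect_congr rfl fun y _ => ?_
  rw [Finset.expect_product]

lemma expect_mul_swapAt_eq_expect_sq {u : ι} {Q : (∀ i, β i × β i) → ℝ}
    (hQ : IgnoresSndAt u Q) :
    𝔼 z, Q z * Q (swapAt u z) =
      𝔼 y : ∀ j : {j // j ≠ u}, β j × β j, (𝔼 a, Q (joinAt u (a, a) y)) ^ 2 := by
  rw [expect_eq_expect_joinAt u]
  refine Finset.expect_congr rfl fun y _ => ?_
  rw [sq, Finset.expect_mul_expect]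
  refine Finset.expect_congr rfl fun a _ => Finset.expect_congr rfl fun b _ => ?_
  rw [swapAt_joinAt, Prod.swap_prod_mk, hQ.joinAt_eq, hQ.joinAt_eq b a]

lemma expect_mul_swapAt_nonneg {u : ι} {Q : (∀ i, β i × β i) → ℝ} (hQ : IgnoresSndAt u Q) :
    0 ≤ 𝔼 z, Q z * Q (swapAt u z) := by
  rw [expect_mul_swapAt_eq_expect_sq hQ]
  exact Finset.expect_nonneg fun _ _ => sq_nonneg _

lemma sq_expect_mul_le {u : ι} {Q₀ Q₁ : (∀ i, β i × β i) → ℝ} (h₀ : IgnoresSndAt u Q₀)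
    (h₁ : IgnoresFstAt u Q₁) :
    (𝔼 z, Q₀ z * Q₁ z) ^ 2 ≤
      (𝔼 z, Q₀ z * Q₀ (swapAt u z)) * 𝔼 z, Q₁ z * Q₁ (swapAt u z) := by
  have hmix : 𝔼 z, Q₀ z * Q₁ z = 𝔼 y : ∀ j : {j // j ≠ u}, β j × β j,
      (𝔼 a, Q₀ (joinAt u (a, a) y)) * 𝔼 b, Q₁ (joinAt u (b, b) y) := by
    rw [expect_eq_expect_joinAt u]
    refine Finset.expect_congr rfl fun y _ => ?_
    rw [Finset.expect_mul_expect]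
    refine Finset.expect_congr rfl fun a _ => Finset.expect_congr rfl fun b _ => ?_
    rw [h₀.joinAt_eq, h₁.joinAt_eq]
  have hsq₁ : 𝔼 z, Q₁ z * Q₁ (swapAt u z) =
      𝔼 y : ∀ j : {j // j ≠ u}, β j × β j, (𝔼 b, Q₁ (joinAt u (b, b) y)) ^ 2 := by
    rw [expect_eq_expect_joinAt u]
    refine Finset.expect_congr rfl fun y _ => ?_
    rw [sq, Finset.expect_mul_expect, Finset.expect_comm]
    refine Finset.expect_congr rfl fun b _ => Finset.expect_congr rfl fun a _ => ?_
    rw [swapAt_joinAt, Prod.swap_prod_mk, h₁.joinAt_eq, h₁.joinAt_eq b a]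
  rw [hmix, expect_mul_swapAt_eq_expect_sq h₀, hsq₁]
  exact Finset.expect_mul_sq_le_sq_mul_sq _ _ _

end Pairs

section Cube

def vertex (ω : ι → Bool) (z : ∀ i, β i × β i) : ∀ i, β i :=
  mixPoint ω (fun i => (z i).1) (fun i => (z i).2)

def flipAt (u : ι) (ω : ι → Bool) : ι → Bool := update ω u (!ω u)

lemma flipAt_flipAt (u : ι) (ω : ι → Bool) : flipAt u (flipAt u ω) = ω := by
  simp [flipAt]

lemma vertex_update (ω : ι → Bool) (z : ∀ i, β i × β i) (u : ι) (w : β u × β u) :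
    vertex ω (update z u w) = update (vertex ω z) u (if ω u then w.2 else w.1) := by
  funext i
  by_cases h : i = u
  · subst h; simp [vertex, mixPoint]
  · simp [vertex, mixPoint, h]

lemma vertex_swapAt (ω : ι → Bool) (u : ι) (z : ∀ i, β i × β i) :
    vertex ω (swapAt u z) = vertex (flipAt u ω) z := by
  funext i
  by_cases h : i = u
  · subst h; cases h : ω i <;> simp [vertex, mixPoint, swapAt, flipAt, h]
  · simp [vertex, mixPoint, swapAt, flipAt, h]

lemma ignoresSndAt_prod {A : Finset (ι → Bool)} {u : ι} (hA : ∀ ω ∈ A, ω u = false)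
    (h : (ι → Bool) → (∀ i, β i) → ℝ) :
    IgnoresSndAt u (fun z => ∏ ω ∈ A, h ω (vertex ω z)) := fun z a b b' =>
  Finset.prod_congr rfl fun ω hω => by simp only [vertex_update, hA ω hω]; rfl

lemma ignoresFstAt_prod {A : Finset (ι → Bool)} {u : ι} (hA : ∀ ω ∈ A, ω u = true)
    (h : (ι → Bool) → (∀ i, β i) → ℝ) :
    IgnoresFstAt u (fun z => ∏ ω ∈ A, h ω (vertex ω z)) := fun z a a' b =>
  Finset.prod_congr rfl fun ω hω => by simp only [vertex_update, hA ω hω]; rfl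

variable [Fintype ι]

def cube (S : Finset ι) : Finset (ι → Bool) := univ.filter fun ω => ∀ i ∉ S, ω i = false

lemma mem_cube {S : Finset ι} {ω : ι → Bool} : ω ∈ cube S ↔ ∀ i ∉ S, ω i = false := by
  simp [cube]

lemma cube_mono {S T : Finset ι} (h : S ⊆ T) : cube S ⊆ cube T := fun _ hω =>
  mem_cube.2 fun i hi => mem_cube.1 hω i fun hiS => hi (h hiS)

lemma cube_empty : cube (∅ : Finset ι) = {fun _ => false} := by
  ext ω
  simp only [mem_cube, Finset.notMem_empty, not_false_eq_true, forall_const,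
    Finset.mem_singleton, funext_iff]

lemma card_cube (S : Finset ι) : #(cube S) = 2 ^ #S := by
  rw [← Fintype.card_bool, ← Fintype.card_coe S, ← Fintype.card_fun]
  refine Finset.card_nbij' (fun ω i => ω i) (fun c i => if h : i ∈ S then c ⟨i, h⟩ else false)
    (fun _ _ => Finset.mem_univ _) (fun c _ => mem_cube.2 fun i hi => dif_neg hi)
    (fun ω hω => funext fun i => ?_) (fun c _ => funext fun i => dif_pos i.2)
  by_cases hi : i ∈ S
  · exact dif_pos hi
  · exact (dif_neg hi).trans (mem_cube.1 hω i hi).symm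

lemma filter_cube_apply_eq_false (S : Finset ι) (u : ι) :
    (cube S).filter (fun ω => ω u = false) = cube (S.erase u) := by
  ext ω
  simp only [Finset.mem_filter, mem_cube, Finset.mem_erase, not_and_or, ne_eq, not_not]
  constructor
  · rintro ⟨h, hu⟩ i (rfl | hi)
    exacts [hu, h i hi]
  · exact fun h => ⟨fun i hi => h i (Or.inr hi), h u (Or.inl rfl)⟩

lemma flipAt_mem_cube {S : Finset ι} {u : ι} (hu : u ∈ S) {ω : ι → Bool} (hω : ω ∈ cube S) :
    flipAt u ω ∈ cube S :=
  mem_cube.2 fun i hi => by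
    rw [flipAt, update_of_ne (ne_of_mem_of_not_mem hu hi).symm]
    exact mem_cube.1 hω i hi

noncomputable def cubeProd (A : Finset (ι → Bool)) (F : (∀ i, β i) → ℝ) (z : ∀ i, β i × β i) : ℝ :=
  ∏ ω ∈ A, F (vertex ω z)

/-- The vertices with `ω u ≠ b` are the reflections in the direction `u` of those with
`ω u = b`. -/
lemma prod_cube_update {U : Finset ι} {u : ι} (hu : u ∈ U) (b : Bool)
    (h : (ι → Bool) → (∀ i, β i) → ℝ) (z : ∀ i, β i × β i) :
    ∏ ω ∈ cube U, h (update ω u b) (vertex ω z) =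
      (∏ ω ∈ (cube U).filter (· u = b), h ω (vertex ω z)) *
        ∏ ω ∈ (cube U).filter (· u = b), h ω (vertex ω (swapAt u z)) := by
  rw [← Finset.prod_filter_mul_prod_filter_not (cube U) (· u = b)]
  have flip_eq : ∀ ω : ι → Bool, ¬ω u = b → flipAt u ω = update ω u b := fun ω hω => by
    rw [flipAt, Bool.eq_not_of_ne hω, Bool.not_not]
  congr 1
  · refine Finset.prod_congr rfl fun ω hω => ?_
    rw [← (Finset.mem_filter.1 hω).2, update_eq_self]
  · refine Finset.prod_nbij' (flipAt u) (flipAt u) (fun ω hω => ?_) (fun ω hω => ?_)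
      (fun ω _ => flipAt_flipAt u ω) (fun ω _ => flipAt_flipAt u ω) (fun ω hω => ?_)
    · obtain ⟨hωU, hωu⟩ := Finset.mem_filter.1 hω
      refine Finset.mem_filter.2 ⟨flipAt_mem_cube hu hωU, ?_⟩
      rw [flip_eq ω hωu, update_self]
    · obtain ⟨hωU, hωu⟩ := Finset.mem_filter.1 hω
      refine Finset.mem_filter.2 ⟨flipAt_mem_cube hu hωU, ?_⟩
      simp [flipAt, hωu]
    · rw [vertex_swapAt, flipAt_flipAt, flip_eq ω (Finset.mem_filter.1 hω).2]

variable [∀ i, Fintype (β i)]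

noncomputable def cubeAvg (A : Finset (ι → Bool)) (F : (∀ i, β i) → ℝ) : ℝ := 𝔼 z, cubeProd A F z

lemma cubeAvg_cube_nonneg {U : Finset ι} (hU : U.Nonempty) (F : (∀ i, β i) → ℝ) :
    0 ≤ cubeAvg (cube U) F := by
  obtain ⟨u, hu⟩ := hU
  have hsplit := prod_cube_update hu false (fun _ => F)
  unfold cubeAvg cubeProd
  simp only [hsplit]
  exact expect_mul_swapAt_nonneg
    (ignoresSndAt_prod (fun ω hω => (Finset.mem_filter.1 hω).2) (fun _ => F))

lemma sq_expect_cubeProd_mul_le {S : Finset ι} {u : ι} (hu : u ∉ S) (F₀ F₁ : (∀ i, β i) → ℝ)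
    (hF₁ : ∀ x v, F₁ (update x u v) = F₁ x) :
    (𝔼 z, cubeProd (cube S) F₀ z * cubeProd (cube S) F₁ z) ^ 2 ≤
      cubeAvg (cube (insert u S)) F₀ * 𝔼 z, cubeProd (cube S) F₁ z ^ 2 := by
  have hQ₁ : ∀ z w, cubeProd (cube S) F₁ (update z u w) = cubeProd (cube S) F₁ z :=
    fun z w => Finset.prod_congr rfl fun ω _ => by rw [vertex_update, hF₁]
  have h₀ : IgnoresSndAt u (cubeProd (cube S) F₀) :=
    ignoresSndAt_prod (fun ω hω => mem_cube.1 hω u hu) (fun _ => F₀)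
  have h₁ : IgnoresFstAt u (cubeProd (cube S) F₁) := fun z a a' b => by rw [hQ₁, hQ₁]
  have e₀ : 𝔼 z, cubeProd (cube S) F₀ z * cubeProd (cube S) F₀ (swapAt u z) =
      cubeAvg (cube (insert u S)) F₀ := by
    refine Finset.expect_congr rfl fun z _ => ?_
    have hsplit := prod_cube_update (Finset.mem_insert_self u S) false (fun _ => F₀) z
    rw [filter_cube_apply_eq_false, Finset.erase_insert hu] at hsplit
    exact hsplit.symm
  have e₁ : 𝔼 z, cubeProd (cube S) F₁ z * cubeProd (cube S) F₁ (swapAt u z) =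
      𝔼 z, cubeProd (cube S) F₁ z ^ 2 :=
    Finset.expect_congr rfl fun z _ => by rw [swapAt, hQ₁, sq]
  rw [← e₀, ← e₁]
  exact sq_expect_mul_le h₀ h₁

lemma cubeAvg_one_add (A : Finset (ι → Bool)) (f : (∀ i, β i) → ℝ) :
    cubeAvg A (fun x => 1 + f x) = ∑ B ∈ A.powerset, cubeAvg B f := by
  unfold cubeAvg cubeProd
  rw [← Finset.expect_sum_comm]
  refine Finset.expect_congr rfl fun z _ => ?_
  simp only [add_comm (1 : ℝ), Finset.prod_add, Finset.prod_const_one, mul_one]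

lemma expect_sq_cubeProd_le {A : Finset (ι → Bool)} {F H : (∀ i, β i) → ℝ} {K : ℝ}
    (hFH : ∀ x, F x ^ 2 ≤ K * H x) :
    𝔼 z, cubeProd A F z ^ 2 ≤ K ^ #A * cubeAvg A H := by
  rw [cubeAvg, Finset.mul_expect]
  refine Finset.expect_le_expect fun z _ => ?_
  rw [cubeProd, cubeProd, ← Finset.prod_pow, ← Finset.prod_const, ← Finset.prod_mul_distrib]
  exact Finset.prod_le_prod (fun _ _ => sq_nonneg _) fun ω _ => hFH _

lemma sq_cubeAvg_mul_prod_insert_le {S R : Finset ι} {u : ι} (huS : u ∉ S) (huR : u ∉ R)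
    (Φ : (∀ i, β i) → ℝ) (G : ι → (∀ i, β i) → ℝ) (hG : ∀ x v, G u (update x u v) = G u x) :
    cubeAvg (cube S) (fun x => Φ x * ∏ t ∈ insert u R, G t x) ^ 2 ≤
      cubeAvg (cube (insert u S)) (fun x => Φ x * ∏ t ∈ R, G t x) *
        𝔼 z, cubeProd (cube S) (G u) z ^ 2 := by
  have hsplit : cubeAvg (cube S) (fun x => Φ x * ∏ t ∈ insert u R, G t x) =
      𝔼 z, cubeProd (cube S) (fun x => Φ x * ∏ t ∈ R, G t x) z * cubeProd (cube S) (G u) z :=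
    Finset.expect_congr rfl fun z _ => by
      simp only [cubeProd, ← Finset.prod_mul_distrib, Finset.prod_insert huR]
      exact Finset.prod_congr rfl fun _ _ => by ring
  rw [hsplit]
  exact sq_expect_cubeProd_mul_le huS _ (G u) hG

theorem abs_cubeAvg_mul_prod_pow_le {K B : ℝ} (hK : 0 ≤ K) (hB : 0 ≤ B) (Φ : (∀ i, β i) → ℝ)
    (G : ι → (∀ i, β i) → ℝ) {R : Finset ι} (hG : ∀ t ∈ R, ∀ x v, G t (update x t v) = G t x)
    (hGB : ∀ t ∈ R, ∀ S : Finset ι, t ∉ S → 𝔼 z, cubeProd (cube S) (G t) z ^ 2 ≤ K ^ 2 ^ #S * B)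
    {S : Finset ι} (hSR : Disjoint S R) :
    |cubeAvg (cube S) (fun x => Φ x * ∏ t ∈ R, G t x)| ^ 2 ^ #R ≤
      K ^ (#R * 2 ^ (#S + #R - 1)) * B ^ (2 ^ #R - 1) * |cubeAvg (cube (S ∪ R)) Φ| := by
  induction R using Finset.induction_on generalizing S with
  | empty => simp
  | insert u R hu ih =>
    have huS : u ∉ S := Finset.disjoint_right.1 hSR (Finset.mem_insert_self u R)
    set E' := cubeAvg (cube (insert u S)) (fun x => Φ x * ∏ t ∈ R, G t x)
    set A := 𝔼 z, cubeProd (cube S) (G u) z ^ 2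
    have hCS : cubeAvg (cube S) (fun x => Φ x * ∏ t ∈ insert u R, G t x) ^ 2 ≤ E' * A :=
      sq_cubeAvg_mul_prod_insert_le huS hu Φ G (hG u (Finset.mem_insert_self u R))
    have hA : A ≤ K ^ 2 ^ #S * B := hGB u (Finset.mem_insert_self u R) S huS
    have hA₀ : 0 ≤ A := Finset.expect_nonneg fun _ _ => sq_nonneg _
    have ih' := ih (fun t ht => hG t (Finset.mem_insert_of_mem ht))
      (fun t ht => hGB t (Finset.mem_insert_of_mem ht))
      (Finset.disjoint_insert_left.2 ⟨hu, Finset.disjoint_of_subset_right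
        (Finset.subset_insert u R) hSR⟩)
    rw [Finset.insert_union, ← Finset.union_insert, Finset.card_insert_of_notMem huS] at ih'
    calc |cubeAvg (cube S) (fun x => Φ x * ∏ t ∈ insert u R, G t x)| ^ 2 ^ #(insert u R)
        = (cubeAvg (cube S) (fun x => Φ x * ∏ t ∈ insert u R, G t x) ^ 2) ^ 2 ^ #R := by
          rw [Finset.card_insert_of_notMem hu, pow_succ', pow_mul, sq_abs]
      _ ≤ (E' * A) ^ 2 ^ #R := pow_le_pow_left₀ (sq_nonneg _) hCS _
      _ ≤ |E'| ^ 2 ^ #R * (K ^ 2 ^ #S * B) ^ 2 ^ #R := by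
          rw [mul_pow, ← abs_pow]
          exact mul_le_mul (le_abs_self _) (pow_le_pow_left₀ hA₀ hA _) (by positivity)
            (abs_nonneg _)
      _ ≤ K ^ (#R * 2 ^ (#S + 1 + #R - 1)) * B ^ (2 ^ #R - 1) *
            |cubeAvg (cube (S ∪ insert u R)) Φ| * (K ^ 2 ^ #S * B) ^ 2 ^ #R :=
          mul_le_mul_of_nonneg_right ih' (by positivity)
      _ = K ^ (#(insert u R) * 2 ^ (#S + #(insert u R) - 1)) * B ^ (2 ^ #(insert u R) - 1) *
            |cubeAvg (cube (S ∪ insert u R)) Φ| := by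
          have hB2 : 2 ^ (#R + 1) - 1 = 2 ^ #R - 1 + 2 ^ #R := by
            rw [pow_succ]; have := Nat.one_le_two_pow (n := #R); omega
          rw [Finset.card_insert_of_notMem hu, hB2, show #S + 1 + #R - 1 = #S + #R by omega,
            show #S + (#R + 1) - 1 = #S + #R by omega]
          ring

variable [∀ i, Nonempty (β i)]

lemma cubeAvg_one (A : Finset (ι → Bool)) : cubeAvg (β := β) A (fun _ => 1) = 1 := by
  simp [cubeAvg, cubeProd]

lemma cubeAvg_empty (F : (∀ i, β i) → ℝ) : cubeAvg ∅ F = 1 := by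
  simp [cubeAvg, cubeProd]

lemma cubeAvg_cube_empty (F : (∀ i, β i) → ℝ) : cubeAvg (cube ∅) F = 𝔼 x, F x := by
  have hvertex : ∀ z, cubeProd (cube ∅) F z = F (fun i => (z i).1) := fun z => by
    rw [cubeProd, cube_empty, Finset.prod_singleton]
    rfl
  simp only [cubeAvg, hvertex, expect_pair fun x (_ : ∀ i, β i) => F x, Fintype.expect_const]

lemma cubeAvg_one_add_le {A : Finset (ι → Bool)} {f : (∀ i, β i) → ℝ} {c : ℝ} (hc : 0 ≤ c)
    (hf : ∀ B ⊆ A, B.Nonempty → |cubeAvg B f| ≤ c) :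
    cubeAvg A (fun x => 1 + f x) ≤ 1 + 2 ^ #A * c := by
  rw [cubeAvg_one_add, ← Finset.add_sum_erase _ _ (Finset.empty_mem_powerset A), cubeAvg_empty]
  gcongr
  calc ∑ B ∈ A.powerset.erase ∅, cubeAvg B f ≤ #(A.powerset.erase ∅) • c :=
        Finset.sum_le_card_nsmul _ _ _ fun B hB => by
          obtain ⟨hB, hBA⟩ := Finset.mem_erase.1 hB
          exact (le_abs_self _).trans
            (hf B (Finset.mem_powerset.1 hBA) (Finset.nonempty_iff_ne_empty.2 hB))
    _ ≤ 2 ^ #A * c := by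
        rw [nsmul_eq_mul]
        gcongr
        exact_mod_cast (Finset.card_erase_le).trans (Finset.card_powerset A).le

end Cube

section GowersCauchySchwarz

lemma piecewise_insert_update {P : Finset ι} {u : ι} (hu : u ∉ P) (c ω : ι → Bool) (b : Bool) :
    (insert u P).piecewise (update c u b) ω = P.piecewise c (update ω u b) := by
  funext i
  by_cases hiu : i = u
  · subst hiu; simp [Finset.piecewise, hu]
  · simp [Finset.piecewise, hiu]

variable [Fintype ι]

lemma prod_cube_insert {P : Finset ι} {u : ι} (hu : u ∉ P) (h : (ι → Bool) → ℝ) :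
    ∏ c ∈ cube (insert u P), h c = ∏ c ∈ cube P, h (update c u false) * h (update c u true) := by
  rw [← Finset.prod_filter_mul_prod_filter_not (cube (insert u P)) (· u = false),
    filter_cube_apply_eq_false, Finset.erase_insert hu, Finset.prod_mul_distrib]
  congr 1
  · exact Finset.prod_congr rfl fun c hc => by
      rw [update_eq_self_iff.2 (mem_cube.1 hc u hu).symm]
  · refine Finset.prod_nbij' (update · u false) (update · u true) (fun c hc => ?_) (fun c hc => ?_)
      (fun c hc => ?_) (fun c _ => ?_) (fun c hc => ?_)
    · obtain ⟨hcP, -⟩ := Finset.mem_filter.1 hc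
      refine mem_cube.2 fun i hi => ?_
      by_cases hiu : i = u
      · subst hiu; exact update_self ..
      · rw [update_of_ne hiu]
        exact mem_cube.1 hcP i (by simp [hiu, hi])
    · refine Finset.mem_filter.2 ⟨mem_cube.2 fun i hi => ?_, by simp⟩
      rw [update_of_ne (by rintro rfl; simp at hi)]
      exact mem_cube.1 hc i (by simp_all)
    · rw [update_idem, update_eq_self_iff.2 (by simpa using (Finset.mem_filter.1 hc).2)]
    · rw [update_idem, update_eq_self_iff.2 (mem_cube.1 ‹_› u hu).symm]
    · rw [update_idem, update_eq_self_iff.2 (by simpa using (Finset.mem_filter.1 hc).2)]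

variable [∀ i, Fintype (β i)]

noncomputable def gowersInner (U : Finset ι) (f : (ι → Bool) → (∀ i, β i) → ℝ) : ℝ :=
  𝔼 z, ∏ ω ∈ cube U, f ω (vertex ω z)

lemma sq_gowersInner_le {U : Finset ι} {u : ι} (hu : u ∈ U)
    (f : (ι → Bool) → (∀ i, β i) → ℝ) :
    gowersInner U f ^ 2 ≤
      gowersInner U (fun ω => f (update ω u false)) *
        gowersInner U (fun ω => f (update ω u true)) := by
  have hsplit : gowersInner U f =
      𝔼 z, (∏ ω ∈ (cube U).filter (· u = false), f ω (vertex ω z)) *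
        ∏ ω ∈ (cube U).filter (· u = true), f ω (vertex ω z) := by
    refine Finset.expect_congr rfl fun z _ => ?_
    rw [← Finset.prod_filter_mul_prod_filter_not (cube U) (· u = false)]
    simp only [Bool.not_eq_false]
  have hface : ∀ b, gowersInner U (fun ω => f (update ω u b)) =
      𝔼 z, (∏ ω ∈ (cube U).filter (· u = b), f ω (vertex ω z)) *
        ∏ ω ∈ (cube U).filter (· u = b), f ω (vertex ω (swapAt u z)) :=
    fun b => Finset.expect_congr rfl fun z _ => prod_cube_update hu b f z
  rw [hsplit, hface, hface]
  exact sq_expect_mul_le (ignoresSndAt_prod (fun ω hω => (Finset.mem_filter.1 hω).2) f)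
    (ignoresFstAt_prod (fun ω hω => (Finset.mem_filter.1 hω).2) f)

/-- Cauchy–Schwarz in each direction of `P` in turn; `P.piecewise c` freezes those directions
at `c`. -/
lemma abs_gowersInner_pow_le_prod {P U : Finset ι} (hPU : P ⊆ U)
    (f : (ι → Bool) → (∀ i, β i) → ℝ) :
    |gowersInner U f| ^ 2 ^ #P ≤ ∏ c ∈ cube P, |gowersInner U (fun ω => f (P.piecewise c ω))| := by
  induction P using Finset.induction_on' with
  | empty => simp [cube_empty]
  | insert u P _ _ hu ih =>
    have hstep : ∀ c, |gowersInner U (fun ω => f (P.piecewise c ω))| ^ 2 ≤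
        |gowersInner U (fun ω => f ((insert u P).piecewise (update c u false) ω))| *
          |gowersInner U (fun ω => f ((insert u P).piecewise (update c u true) ω))| := fun c => by
      simp only [piecewise_insert_update hu]
      rw [sq_abs, ← abs_mul]
      exact (sq_gowersInner_le (hPU (Finset.mem_insert_self u P)) _).trans (le_abs_self _)
    calc |gowersInner U f| ^ 2 ^ #(insert u P) = (|gowersInner U f| ^ 2 ^ #P) ^ 2 := by
          rw [Finset.card_insert_of_notMem hu, pow_succ, pow_mul]
      _ ≤ (∏ c ∈ cube P, |gowersInner U (fun ω => f (P.piecewise c ω))|) ^ 2 :=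
          pow_le_pow_left₀ (by positivity) (ih ((Finset.subset_insert u P).trans hPU)) 2
      _ ≤ ∏ c ∈ cube P,
            (|gowersInner U (fun ω => f ((insert u P).piecewise (update c u false) ω))| *
              |gowersInner U (fun ω => f ((insert u P).piecewise (update c u true) ω))|) := by
          rw [← Finset.prod_pow]
          exact Finset.prod_le_prod (fun _ _ => by positivity) fun c _ => hstep c
      _ = _ := (prod_cube_insert hu
            (fun c => |gowersInner U (fun ω => f ((insert u P).piecewise c ω))|)).symm

theorem abs_gowersInner_pow_le (U : Finset ι) (f : (ι → Bool) → (∀ i, β i) → ℝ) :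
    |gowersInner U f| ^ 2 ^ #U ≤ ∏ c ∈ cube U, |cubeAvg (cube U) (f c)| := by
  refine (abs_gowersInner_pow_le_prod subset_rfl f).trans_eq
    (Finset.prod_congr rfl fun c hc => congrArg abs <| Finset.expect_congr rfl fun z _ =>
      Finset.prod_congr rfl fun ω hω => ?_)
  show f (U.piecewise c ω) _ = _
  congr
  funext i
  by_cases hi : i ∈ U
  · exact Finset.piecewise_eq_of_mem _ _ _ hi
  · rw [Finset.piecewise_eq_of_notMem _ _ _ hi, mem_cube.1 hc i hi, mem_cube.1 hω i hi]

variable [∀ i, Nonempty (β i)]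

lemma abs_cubeAvg_pow_le {A : Finset (ι → Bool)} {U : Finset ι} (hA : A ⊆ cube U)
    (F : (∀ i, β i) → ℝ) : |cubeAvg A F| ^ 2 ^ #U ≤ |cubeAvg (cube U) F| ^ #A := by
  have hinner : gowersInner U (fun ω => if ω ∈ A then F else fun _ => 1) = cubeAvg A F := by
    refine Finset.expect_congr rfl fun z _ => ?_
    simp only [ite_apply, Finset.prod_ite_mem, Finset.inter_eq_right.2 hA, cubeProd]
  have h := abs_gowersInner_pow_le U (fun ω => if ω ∈ A then F else fun _ => 1)
  simpa only [hinner, apply_ite, cubeAvg_one, abs_one, Finset.prod_ite_mem,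
    Finset.inter_eq_right.2 hA, Finset.prod_const] using h

lemma abs_cubeAvg_le {A : Finset (ι → Bool)} {U : Finset ι} (hA : A ⊆ cube U)
    (hA₀ : A.Nonempty) {F : (∀ i, β i) → ℝ} {c : ℝ} (hc₀ : 0 ≤ c) (hc₁ : c ≤ 1)
    (hF : |cubeAvg (cube U) F| ≤ c ^ 2 ^ #U) : |cubeAvg A F| ≤ c := by
  refine le_of_pow_le_pow_left₀ (pow_ne_zero #U two_ne_zero) hc₀ ?_
  calc |cubeAvg A F| ^ 2 ^ #U ≤ |cubeAvg (cube U) F| ^ #A := abs_cubeAvg_pow_le hA F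
    _ ≤ (c ^ 2 ^ #U) ^ #A := pow_le_pow_left₀ (abs_nonneg _) hF _
    _ ≤ c ^ 2 ^ #U := pow_le_of_le_one (by positivity) (pow_le_one₀ hc₀ hc₁) hA₀.card_ne_zero

end GowersCauchySchwarz

section BoxNorm

variable [Fintype ι]

lemma expect_comp_restrict {γ : ι → Type} [∀ i, Fintype (γ i)] (j : ι) [Nonempty (γ j)]
    (Ψ : (∀ i : {i // i ≠ j}, γ i) → ℝ) : 𝔼 z : ∀ i, γ i, Ψ (fun i => z i) = 𝔼 y, Ψ y := by
  rw [Fintype.expect_equiv (Equiv.piSplitAt j γ) (fun z => Ψ (fun i => z i)) (fun p => Ψ p.2)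
    (fun _ => rfl), ← Finset.univ_product_univ, Finset.expect_product]
  exact Fintype.expect_const (𝔼 y, Ψ y)

lemma cubeProd_cube_erase (j : ι) (F : (∀ i : {i // i ≠ j}, β i) → ℝ) (z : ∀ i, β i × β i) :
    cubeProd (cube (univ.erase j)) (fun x => F (fun i => x i)) z =
      cubeProd (cube univ) F (fun i => z i) := by
  refine Finset.prod_nbij' (fun ω i => ω i) (fun ω i => if h : i = j then false else ω ⟨i, h⟩)
    (fun _ _ => mem_cube.2 fun i hi => absurd (Finset.mem_univ i) hi)
    (fun ω _ => mem_cube.2 fun i hi => dif_pos (by simpa using hi))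
    (fun ω hω => funext fun i => ?_) (fun ω _ => funext fun i => dif_neg i.2) (fun _ _ => rfl)
  by_cases h : i = j
  · exact (dif_pos h).trans (mem_cube.1 hω i (by simp [h])).symm
  · exact dif_neg h

variable [∀ i, Fintype (β i)]

lemma cubeAvg_cube_erase (j : ι) [Nonempty (β j)] (F : (∀ i : {i // i ≠ j}, β i) → ℝ) :
    cubeAvg (cube (univ.erase j)) (fun x => F (fun i => x i)) = cubeAvg (cube univ) F := by
  simp only [cubeAvg, cubeProd_cube_erase]
  exact expect_comp_restrict (γ := fun i => β i × β i) j (cubeProd (cube univ) F)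

lemma cubeAvg_cube_univ (F : (∀ i, β i) → ℝ) :
    cubeAvg (cube univ) F = 𝔼 x₀, 𝔼 x₁, ∏ ω : ι → Bool, F (mixPoint ω x₀ x₁) := by
  have hcube : cube (univ : Finset ι) = univ := by simp [cube]
  rw [← expect_pair]
  simp only [cubeAvg, cubeProd, hcube]
  rfl

variable [Nonempty ι]

lemma boxNorm_nonneg (F : (∀ i, β i) → ℝ) : 0 ≤ boxNorm F := by
  rw [boxNorm, ← cubeAvg_cube_univ]
  exact Real.rpow_nonneg (cubeAvg_cube_nonneg univ_nonempty F) _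

lemma boxNorm_pow_card (F : (∀ i, β i) → ℝ) :
    boxNorm F ^ 2 ^ Fintype.card ι = cubeAvg (cube univ) F := by
  rw [boxNorm, ← cubeAvg_cube_univ, one_div, show (2 : ℝ) ^ Fintype.card ι =
    ((2 ^ Fintype.card ι : ℕ) : ℝ) by push_cast; rfl]
  exact Real.rpow_inv_natCast_pow (cubeAvg_cube_nonneg univ_nonempty F) (by positivity)

end BoxNorm

section Hypergraph

variable {r : ℕ}

lemma card_erase_fin (j : Fin (r + 1)) : #(univ.erase j) = r := by simp

lemma nonempty_subtype_ne (hr : 1 ≤ r) (j : Fin (r + 1)) : Nonempty {i // i ≠ j} :=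
  Fintype.card_pos_iff.1 (by simp [Fintype.card_subtype_compl]; omega)

variable {V : Fin (r + 1) → Type} [∀ i, Fintype (V i)]

lemma le_hypSup (ν : ∀ j : Fin (r + 1), EdgeSpace V j → ℝ) (j : Fin (r + 1)) (y : EdgeSpace V j) :
    ν j y ≤ hypSup V ν :=
  (le_ciSup (Set.finite_range _).bddAbove y).trans
    (le_ciSup (Set.finite_range fun j => ⨆ y, ν j y).bddAbove j)

variable [∀ i, Nonempty (V i)]

lemma cubeAvg_cube_erase_eq_boxNorm_pow (hr : 1 ≤ r) (j : Fin (r + 1)) (F : EdgeSpace V j → ℝ) :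
    cubeAvg (cube (univ.erase j)) (fun x => F (fun i => x i)) = boxNorm F ^ 2 ^ r := by
  have hcard : Fintype.card {i // i ≠ j} = r := by simp [Fintype.card_subtype_compl]
  have := nonempty_subtype_ne hr j
  rw [cubeAvg_cube_erase, ← boxNorm_pow_card, hcard]

lemma cubeAvg_le_one_add (hr : 1 ≤ r) {t : Fin (r + 1)} {w : EdgeSpace V t → ℝ} {δ : ℝ}
    (hδ₀ : 0 ≤ δ) (hδ₁ : δ ≤ 1) (hw : boxNorm (fun y => w y - 1) ≤ δ) {S : Finset (Fin (r + 1))}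
    (htS : t ∉ S) : cubeAvg (cube S) (fun x => w (fun i => x i)) ≤ 1 + 2 ^ 2 ^ r * δ := by
  have hSU : S ⊆ univ.erase t := fun i hi =>
    Finset.mem_erase.2 ⟨by rintro rfl; exact htS hi, mem_univ i⟩
  have hnorm : |cubeAvg (cube (univ.erase t)) (fun x => w (fun i => x i) - 1)| ≤
      δ ^ 2 ^ #(univ.erase t) := by
    have := nonempty_subtype_ne hr t
    have hN₀ := boxNorm_nonneg (fun y : EdgeSpace V t => w y - 1)
    rw [cubeAvg_cube_erase_eq_boxNorm_pow hr t (fun y => w y - 1), card_erase_fin,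
      abs_of_nonneg (pow_nonneg hN₀ _)]
    exact pow_le_pow_left₀ hN₀ hw _
  have h := cubeAvg_one_add_le hδ₀ fun B hB hB₀ =>
    abs_cubeAvg_le (hB.trans (cube_mono hSU)) hB₀ hδ₀ hδ₁ hnorm
  simp only [add_sub_cancel, card_cube] at h
  have hSr : #S ≤ r := (Finset.card_le_card hSU).trans (card_erase_fin t).le
  have : (2 : ℝ) ^ 2 ^ #S ≤ 2 ^ 2 ^ r :=
    pow_le_pow_right₀ (by norm_num) (Nat.pow_le_pow_right (by norm_num) hSr)
  nlinarith

lemma expect_sq_cubeProd_le_of_le_one_or_le (hr : 1 ≤ r) {t : Fin (r + 1)}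
    {g w : EdgeSpace V t → ℝ} {K δ : ℝ} (hK : 1 ≤ K) (hwK : ∀ y, w y ≤ K) (hg₀ : ∀ y, 0 ≤ g y)
    (hg : (∀ y, g y ≤ 1) ∨ (∀ y, g y ≤ w y)) (hδ₀ : 0 ≤ δ) (hδ₁ : δ ≤ 1)
    (hw : boxNorm (fun y => w y - 1) ≤ δ) {S : Finset (Fin (r + 1))} (htS : t ∉ S) :
    𝔼 z, cubeProd (cube S) (fun x => g (fun i => x i)) z ^ 2 ≤
      K ^ 2 ^ #S * (1 + 2 ^ 2 ^ r * δ) := by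
  rw [← card_cube]
  rcases hg with hg₁ | hgw
  · refine (expect_sq_cubeProd_le (K := K) (H := fun _ => 1) fun x => ?_).trans ?_
    · nlinarith [hg₀ (fun i => x i), hg₁ (fun i => x i)]
    · rw [cubeAvg_one]
      gcongr
      linarith [mul_nonneg (pow_nonneg (by norm_num : (0 : ℝ) ≤ 2) (2 ^ r)) hδ₀]
  · refine (expect_sq_cubeProd_le (K := K) (H := fun x : ∀ i, V i => w (fun i => x i))
      fun x => ?_).trans ?_
    · nlinarith [hg₀ (fun i => x i), hgw (fun i => x i), hwK (fun i => x i)]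
    · gcongr
      exact cubeAvg_le_one_add hr hδ₀ hδ₁ hw htS

lemma abs_expect_mul_prod_pow_le (hr : 1 ≤ r) {ν g : ∀ j : Fin (r + 1), EdgeSpace V j → ℝ}
    {K δ : ℝ} (hK : 1 ≤ K) (hνK : ∀ j y, ν j y ≤ K) (hδ₀ : 0 ≤ δ) (hδ₁ : δ ≤ 1)
    (hν : ∀ j, j ≠ 0 → boxNorm (fun y => ν j y - 1) ≤ δ) (hg₀ : ∀ j, j ≠ 0 → ∀ y, 0 ≤ g j y)
    (hg : ∀ j, j ≠ 0 → (∀ y, g j y ≤ 1) ∨ (∀ y, g j y ≤ ν j y)) :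
    |𝔼 x : ∀ i, V i, (ν 0 (fun i => x i) - 1) *
        ∏ j : {j : Fin (r + 1) // j ≠ 0}, g j (fun i => x i)| ^ 2 ^ r ≤
      K ^ (r * 2 ^ (r - 1)) * (1 + 2 ^ 2 ^ r * δ) ^ (2 ^ r - 1) *
        boxNorm (fun y : EdgeSpace V 0 => ν 0 y - 1) ^ 2 ^ r := by
  have hchain := abs_cubeAvg_mul_prod_pow_le (β := V) (K := K) (B := 1 + 2 ^ 2 ^ r * δ)
    (by linarith) (by positivity) (fun x => ν 0 (fun i => x i) - 1)
    (fun t x => g t (fun i => x i)) (R := univ.erase 0)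
    (fun t _ x v => congrArg (g t) (funext fun i => update_of_ne i.2 v x))
    (fun t ht S htS => expect_sq_cubeProd_le_of_le_one_or_le hr hK (hνK t)
      (hg₀ t (Finset.ne_of_mem_erase ht)) (hg t (Finset.ne_of_mem_erase ht)) hδ₀ hδ₁
      (hν t (Finset.ne_of_mem_erase ht)) htS)
    (Finset.disjoint_empty_left _)
  have := nonempty_subtype_ne hr 0
  have hprod : ∀ x : ∀ i, V i, ∏ t ∈ univ.erase 0, g t (fun i => x i) =
      ∏ j : {j : Fin (r + 1) // j ≠ 0}, g j (fun i => x i) :=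
    fun x => Finset.prod_subtype _ (fun j => by simp) _
  rw [cubeAvg_cube_empty, Finset.empty_union,
    cubeAvg_cube_erase_eq_boxNorm_pow hr 0 (fun y => ν 0 y - 1), card_erase_fin,
    Finset.card_empty, zero_add, abs_of_nonneg (pow_nonneg (boxNorm_nonneg _) _)] at hchain
  simpa only [hprod] using hchain

end Hypergraph

lemma abs_le_of_abs_pow_le {X K B N : ℝ} {r : ℕ} (hK : 0 ≤ K) (hB : 1 ≤ B) (hN : 0 ≤ N)
    (h : |X| ^ 2 ^ r ≤ K ^ (r * 2 ^ (r - 1)) * B ^ (2 ^ r - 1) * N ^ 2 ^ r) :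
    |X| ≤ B * N * K ^ ((r : ℝ) / 2) := by
  have hKr : (K ^ ((r : ℝ) / 2)) ^ 2 ^ r = K ^ (r * 2 ^ (r - 1)) := by
    rw [← Real.rpow_mul_natCast hK, ← Real.rpow_natCast]
    congr 1
    rcases r with _ | r
    · simp
    · push_cast [pow_succ]
      ring
  refine le_of_pow_le_pow_left₀ (pow_ne_zero r two_ne_zero) (by positivity) (h.trans ?_)
  calc K ^ (r * 2 ^ (r - 1)) * B ^ (2 ^ r - 1) * N ^ 2 ^ r
      ≤ K ^ (r * 2 ^ (r - 1)) * B ^ 2 ^ r * N ^ 2 ^ r := by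
        gcongr
        exact Nat.sub_le _ _
    _ = (B * N * K ^ ((r : ℝ) / 2)) ^ 2 ^ r := by
        rw [mul_pow, mul_pow, hKr]
        ring

end StrongLinearForms

open StrongLinearForms

/-- The one-factor-per-edge variant of the strong linear forms estimate, in which the
exponent of `‖ν‖_∞` gets improved to `r/2`. -/
theorem strong_linear_forms_gowers_half (r : ℕ) (hr : 2 ≤ r) (ε : ℝ) (hε : 0 < ε) :
    ∃ δ : ℝ, 0 < δ ∧
      ∀ (V : Fin (r + 1) → Type) [∀ i, Fintype (V i)] [∀ i, Nonempty (V i)]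
        (ν : ∀ j : Fin (r + 1), EdgeSpace V j → ℝ),
        (∀ j x, 0 ≤ ν j x) → 1 ≤ hypSup V ν →
        (∀ j : Fin (r + 1), j ≠ 0 → boxNorm (fun z : EdgeSpace V j => ν j z - 1) ≤ δ) →
        ∀ g : ∀ j : Fin (r + 1), EdgeSpace V j → ℝ,
        (∀ (j : Fin (r + 1)), j ≠ 0 → ∀ x, 0 ≤ g j x) →
        (∀ (j : Fin (r + 1)), j ≠ 0 → (∀ x, g j x ≤ 1) ∨ (∀ x, g j x ≤ ν j x)) →
        |𝔼 x : ∀ i, V i,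
            (ν 0 (fun i => x i) - 1) *
              ∏ j : {j : Fin (r + 1) // j ≠ 0}, g j (fun i => x i)|
          ≤ (1 + ε) * boxNorm (fun z : EdgeSpace V 0 => ν 0 z - 1) *
              hypSup V ν ^ ((r : ℝ) / 2) := by
  -- `2 ^ 2 ^ r` bounds the number of sets of vertices of a face of an edge's box.
  refine ⟨min 1 (ε / 2 ^ 2 ^ r), lt_min one_pos (by positivity), ?_⟩
  intro V _ _ ν _ hK hbox g hg₀ hg
  set δ := min 1 (ε / 2 ^ 2 ^ r)
  have hr₁ : 1 ≤ r := by omega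
  have hδ₀ : 0 ≤ δ := le_min zero_le_one (by positivity)
  have hδε : 2 ^ 2 ^ r * δ ≤ ε := (le_div_iff₀' (by positivity)).1 (min_le_right _ _)
  have := nonempty_subtype_ne hr₁ 0
  calc _ ≤ (1 + 2 ^ 2 ^ r * δ) * boxNorm (fun z : EdgeSpace V 0 => ν 0 z - 1) *
        hypSup V ν ^ ((r : ℝ) / 2) :=
      abs_le_of_abs_pow_le (by linarith) (le_add_of_nonneg_right (by positivity))
        (boxNorm_nonneg _) (abs_expect_mul_prod_pow_le hr₁ hK (le_hypSup ν) hδ₀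
          (min_le_left _ _) hbox hg₀ hg)
    _ ≤ _ := by
      gcongr
      exact boxNorm_nonneg _
end

section
/- Fix an integer r ≥ 2. For every ε > 0 there exists δ > 0 such that the following holds. Let ν be a weighted hypergraph on nonempty finite sets V₀, …, V_r with ‖ν‖_∞ ≥ 1, and suppose ‖ν_e − 1‖_{U^e} ≤ δ·‖ν‖_∞^{−(r−1)} for every e ∈ H. Define ν'_{e₀} : V_{e₀} → ℝ_{≥0} by ν'_{e₀}(x_{e₀}) = 𝔼[ ∏_{e∈H∖{e₀}} ν_e(x_e) | x₀ ∈ V₀ ]. Then 𝔼[ (ν'_{e₀}(x_{e₀}) − 1)² | x_{e₀} ∈ V_{e₀} ] ≤ ε. -/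
open Finset
open scoped BigOperators

/-!
Writing `ν_e = (ν_e - 1) + 1` and expanding the product, `ν'_{e₀} - 1` is a sum of `2^r - 1`
terms `𝔼_{x₀} ∏_{e ∈ S} (ν_e - 1)`, so by Cauchy–Schwarz it suffices to bound the mean square of
each term by `δ²`. Fix `e_k ∈ S`. The mean square doubles the vertex `0`; a Cauchy–Schwarz step
in each of the other `r - 1` vertices `j` of `e_k` removes the factor `(ν_{e_j} - 1) / ‖ν‖_∞`,
which is bounded by `1` and does not depend on `x_j`, and doubles `j`. What remains is
`‖ν_{e_k} - 1‖_{U^{e_k}}^{2^r}`, and the lost powers `‖ν‖_∞^{|S| - 1} ≤ ‖ν‖_∞^{r - 1}` are exactly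
compensated by the normalisation of the hypothesis.
-/

open Function

lemma sq_expect_le_expect_sq {α : Type*} [Fintype α] [Nonempty α] (f : α → ℝ) :
    (𝔼 a, f a) ^ 2 ≤ 𝔼 a, f a ^ 2 := by
  simpa using Finset.expect_mul_sq_le_sq_mul_sq univ f 1

lemma expect_expect_eq_expect_prod {α β : Type*} [Fintype α] [Fintype β] (F : α → β → ℝ) :
    𝔼 a, 𝔼 b, F a b = 𝔼 p : α × β, F p.1 p.2 := by
  rw [← Finset.univ_product_univ, Finset.expect_product']

lemma prod_sub_one_eq_sum {κ R : Type*} [DecidableEq κ] [CommRing R] (s : Finset κ) (a : κ → R) :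
    ∏ j ∈ s, a j - 1 = ∑ S ∈ s.powerset.erase ∅, ∏ j ∈ S, (a j - 1) := by
  have h := Finset.prod_add_one (f := fun j => a j - 1) s
  simp only [sub_add_cancel] at h
  rw [h, ← Finset.add_sum_erase _ _ (Finset.empty_mem_powerset s), Finset.prod_empty,
    add_sub_cancel_left]

lemma expect_sq_sum_le {α κ : Type*} [Fintype α] [Nonempty α] (s : Finset κ) (Γ : κ → α → ℝ)
    {b : ℝ} (h : ∀ S ∈ s, 𝔼 y, Γ S y ^ 2 ≤ b) :
    𝔼 y, (∑ S ∈ s, Γ S y) ^ 2 ≤ #s ^ 2 * b := by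
  calc 𝔼 y, (∑ S ∈ s, Γ S y) ^ 2 ≤ 𝔼 y, #s * ∑ S ∈ s, Γ S y ^ 2 :=
        Finset.expect_le_expect fun y _ => sq_sum_le_card_mul_sum_sq
    _ = #s * ∑ S ∈ s, 𝔼 y, Γ S y ^ 2 := by rw [← Finset.mul_expect, Finset.expect_sum_comm]
    _ ≤ #s * ∑ _S ∈ s, b := by gcongr with S hS; exact h S hS
    _ = #s ^ 2 * b := by rw [Finset.sum_const, nsmul_eq_mul]; ring

lemma abs_sub_one_div_le_one {t M : ℝ} (hM : 1 ≤ M) (ht₀ : 0 ≤ t) (htM : t ≤ M) :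
    |(t - 1) / M| ≤ 1 := by
  have hM₀ : 0 < M := by linarith
  rw [abs_div, abs_of_pos hM₀, div_le_one hM₀, abs_le]
  constructor <;> linarith

section Cube

variable {ι : Type} [DecidableEq ι] {V : ι → Type}

lemma mixPoint_update_left {ω : ι → Bool} {c : ι} (hω : ω c = false) (x₀ x₁ : ∀ i, V i)
    (a : V c) : mixPoint ω (update x₀ c a) x₁ = update (mixPoint ω x₀ x₁) c a := by
  ext i
  rcases eq_or_ne i c with rfl | hi <;> simp [mixPoint, *]

lemma mixPoint_update_right {ω : ι → Bool} {c : ι} (hω : ω c = false) (x₀ x₁ : ∀ i, V i)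
    (a : V c) : mixPoint ω x₀ (update x₁ c a) = mixPoint ω x₀ x₁ := by
  ext i
  rcases eq_or_ne i c with rfl | hi <;> simp [mixPoint, *]

lemma mixPoint_update_true (ω : ι → Bool) (c : ι) (x₀ x₁ : ∀ i, V i) :
    mixPoint (update ω c true) x₀ x₁ = update (mixPoint ω x₀ x₁) c (x₁ c) := by
  ext i
  rcases eq_or_ne i c with rfl | hi <;> simp [mixPoint, *]

lemma restrict_ne_update_self (x : ∀ i, V i) (j : ι) (a : V j) :
    (fun i : {i // i ≠ j} => update x j a i) = fun i : {i // i ≠ j} => x i :=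
  funext fun i => update_of_ne i.2 a x

variable [Fintype ι]

def cubePatterns (B : Finset ι) : Finset (ι → Bool) :=
  {ω | ∀ i ∉ B, ω i = false}

lemma mem_cubePatterns {B : Finset ι} {ω : ι → Bool} :
    ω ∈ cubePatterns B ↔ ∀ i ∉ B, ω i = false := by
  simp [cubePatterns]

lemma eq_false_of_mem_cubePatterns {B : Finset ι} {c : ι} (hc : c ∉ B) {ω : ι → Bool}
    (hω : ω ∈ cubePatterns B) : ω c = false :=
  mem_cubePatterns.mp hω c hc

lemma prod_cubePatterns_insert {B : Finset ι} {c : ι} (hc : c ∉ B) (H : (ι → Bool) → ℝ) :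
    ∏ ω ∈ cubePatterns (insert c B), H ω
      = ∏ ω ∈ cubePatterns B, H ω * H (update ω c true) := by
  rw [Finset.prod_mul_distrib, ← Finset.prod_filter_mul_prod_filter_not _ (fun ω => ω c = false)]
  congr 1
  · refine Finset.prod_congr ?_ fun _ _ => rfl
    ext ω
    simp only [Finset.mem_filter, mem_cubePatterns, Finset.mem_insert, not_or]
    constructor
    · rintro ⟨h, hc'⟩ i hi
      rcases eq_or_ne i c with rfl | hic
      · exact hc'
      · exact h i ⟨hic, hi⟩
    · intro h
      exact ⟨fun i hi => h i hi.2, h c hc⟩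
  · refine Finset.prod_nbij' (fun ω => update ω c false) (fun ω => update ω c true)
      ?_ ?_ ?_ ?_ ?_ <;>
      simp only [Finset.mem_filter, mem_cubePatterns, Finset.mem_insert, not_or, Bool.not_eq_false]
    · intro ω ⟨h, _⟩ i hi
      rcases eq_or_ne i c with rfl | hic
      · simp
      · simpa [hic] using h i ⟨hic, hi⟩
    · intro ω h
      refine ⟨fun i hi => ?_, by simp⟩
      simpa [hi.1] using h i hi.2
    · intro ω ⟨_, h⟩
      simp [← h]
    · intro ω h
      simp [← h c hc]
    · intro ω ⟨_, h⟩
      simp [← h]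

variable [∀ i, Fintype (V i)] [∀ i, Nonempty (V i)]

/-- The involution `(x, a) ↦ (update x c a, x c)` preserves the uniform measure. -/
lemma expect_eq_expect_expect_update (c : ι) (G : (∀ i, V i) → V c → ℝ)
    (hG : ∀ x b, G (update x c b) = G x) :
    𝔼 x, G x (x c) = 𝔼 x, 𝔼 a, G x a := by
  have hinv : Involutive fun p : (∀ i, V i) × V c => (update p.1 c p.2, p.1 c) := by
    rintro ⟨x, a⟩
    simp
  calc 𝔼 x, G x (x c) = 𝔼 p : (∀ i, V i) × V c, G p.1 (p.1 c) := by
        rw [← expect_expect_eq_expect_prod (fun x (_ : V c) => G x (x c))]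
        simp
    _ = 𝔼 p : (∀ i, V i) × V c, G p.1 p.2 :=
        Fintype.expect_equiv hinv.toPerm _ _ fun p => by simp [hG]
    _ = 𝔼 x, 𝔼 a, G x a := (expect_expect_eq_expect_prod _).symm

/-- The `2^|B|`-th power of the box norm of `h` in the coordinates of `B`, averaged over the
remaining coordinates. -/
noncomputable def cubeAvg (B : Finset ι) (h : (∀ i, V i) → ℝ) : ℝ :=
  𝔼 x₀, 𝔼 x₁, ∏ ω ∈ cubePatterns B, h (mixPoint ω x₀ x₁)

lemma cubeAvg_insert {B : Finset ι} {c : ι} (hc : c ∉ B) (h : (∀ i, V i) → ℝ) :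
    cubeAvg (insert c B) h
      = 𝔼 x₀, 𝔼 x₁, (𝔼 a : V c, ∏ ω ∈ cubePatterns B, h (update (mixPoint ω x₀ x₁) c a)) ^ 2 := by
  have hB : ∀ ω ∈ cubePatterns B, ω c = false := fun _ => eq_false_of_mem_cubePatterns hc
  set Ψ : (∀ i, V i) → (∀ i, V i) → V c → ℝ :=
    fun x₀ x₁ a => ∏ ω ∈ cubePatterns B, h (update (mixPoint ω x₀ x₁) c a)
  have hΨ₀ : ∀ x₀ x₁ a b, Ψ (update x₀ c b) x₁ a = Ψ x₀ x₁ a := fun x₀ x₁ a b =>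
    Finset.prod_congr rfl fun ω hω => by rw [mixPoint_update_left (hB ω hω), update_idem]
  have hΨ₁ : ∀ x₀ x₁ a b, Ψ x₀ (update x₁ c b) a = Ψ x₀ x₁ a := fun x₀ x₁ a b =>
    Finset.prod_congr rfl fun ω hω => by rw [mixPoint_update_right (hB ω hω)]
  calc cubeAvg (insert c B) h = 𝔼 x₀, 𝔼 x₁, Ψ x₀ x₁ (x₀ c) * Ψ x₀ x₁ (x₁ c) := by
        simp only [cubeAvg, prod_cubePatterns_insert hc, Ψ, ← Finset.prod_mul_distrib,
          mixPoint_update_true]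
        refine Finset.expect_congr rfl fun x₀ _ => Finset.expect_congr rfl fun x₁ _ =>
          Finset.prod_congr rfl fun ω hω => ?_
        rw [← mixPoint_update_left (hB ω hω) x₀ x₁ (x₀ c), update_eq_self]
    _ = 𝔼 x₀, 𝔼 a, 𝔼 x₁, 𝔼 b, Ψ x₀ x₁ a * Ψ x₀ x₁ b := by
        rw [expect_eq_expect_expect_update c (fun x₀ a => 𝔼 x₁, Ψ x₀ x₁ a * Ψ x₀ x₁ (x₁ c))
          fun x₀ b => by simp only [hΨ₀]]
        refine Finset.expect_congr rfl fun x₀ _ => Finset.expect_congr rfl fun a _ => ?_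
        exact expect_eq_expect_expect_update c (fun x₁ b => Ψ x₀ x₁ a * Ψ x₀ x₁ b)
          fun x₁ b => by simp only [hΨ₁]
    _ = _ := by
        refine Finset.expect_congr rfl fun x₀ _ => ?_
        rw [Finset.expect_comm]
        simp only [sq, Fintype.expect_mul_expect, Ψ]

lemma cubeAvg_nonneg {B : Finset ι} (hB : B.Nonempty) (h : (∀ i, V i) → ℝ) :
    0 ≤ cubeAvg B h := by
  obtain ⟨c, hc⟩ := hB
  rw [← Finset.insert_erase hc, cubeAvg_insert (Finset.notMem_erase c B)]
  positivity

lemma cubeAvg_singleton (c : ι) (h : (∀ i, V i) → ℝ) :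
    cubeAvg {c} h = 𝔼 x, (𝔼 a : V c, h (update x c a)) ^ 2 := by
  have hP : cubePatterns (∅ : Finset ι) = {fun _ => false} := by
    ext ω
    simp [mem_cubePatterns, funext_iff]
  have hmix : ∀ x₀ x₁ : ∀ i, V i, mixPoint (fun _ => false) x₀ x₁ = x₀ := fun _ _ => rfl
  rw [← insert_empty_eq c, cubeAvg_insert (Finset.notMem_empty c), hP]
  simp only [Finset.prod_singleton, hmix, Fintype.expect_const]

lemma cubeAvg_singleton_const_mul (c : ι) (C : ℝ) (h : (∀ i, V i) → ℝ) :
    cubeAvg {c} (fun x => C * h x) = C ^ 2 * cubeAvg {c} h := by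
  simp only [cubeAvg_singleton, ← Finset.mul_expect, mul_pow]

lemma cubeAvg_mul_eq {B : Finset ι} {c : ι} (hc : c ∉ B) {f : (∀ i, V i) → ℝ}
    (hf : ∀ x a, f (update x c a) = f x) (h : (∀ i, V i) → ℝ) :
    cubeAvg B (fun x => f x * h x)
      = 𝔼 x₀, 𝔼 x₁, (∏ ω ∈ cubePatterns B, f (mixPoint ω x₀ x₁))
          * 𝔼 a : V c, ∏ ω ∈ cubePatterns B, h (update (mixPoint ω x₀ x₁) c a) := by
  have hB : ∀ ω ∈ cubePatterns B, ω c = false := fun _ => eq_false_of_mem_cubePatterns hc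
  set G : (∀ i, V i) → V c → ℝ := fun x₀ a => 𝔼 x₁, (∏ ω ∈ cubePatterns B,
    f (mixPoint ω x₀ x₁)) * ∏ ω ∈ cubePatterns B, h (update (mixPoint ω x₀ x₁) c a)
  have hG : ∀ x₀ b, G (update x₀ c b) = G x₀ := by
    intro x₀ b
    ext a
    refine Finset.expect_congr rfl fun x₁ _ => ?_
    congr 1 <;> refine Finset.prod_congr rfl fun ω hω => ?_
    · rw [mixPoint_update_left (hB ω hω), hf]
    · rw [mixPoint_update_left (hB ω hω), update_idem]
  calc cubeAvg B (fun x => f x * h x) = 𝔼 x₀, G x₀ (x₀ c) := by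
        refine Finset.expect_congr rfl fun x₀ _ => Finset.expect_congr rfl fun x₁ _ => ?_
        rw [Finset.prod_mul_distrib]
        congr 1
        refine Finset.prod_congr rfl fun ω hω => ?_
        rw [← mixPoint_update_left (hB ω hω) x₀ x₁ (x₀ c), update_eq_self]
    _ = 𝔼 x₀, 𝔼 a, G x₀ a := expect_eq_expect_expect_update c G hG
    _ = _ := by
        refine Finset.expect_congr rfl fun x₀ _ => ?_
        simp only [G, Finset.mul_expect]
        exact Finset.expect_comm _ _ _

/-- Cauchy–Schwarz in `(x₀, x₁)`, once the coordinate `c`, which `f` does not see, has been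
averaged out. -/
lemma sq_cubeAvg_mul_le {B : Finset ι} {c : ι} (hc : c ∉ B) {f : (∀ i, V i) → ℝ}
    (hf : ∀ x a, f (update x c a) = f x) (hf₁ : ∀ x, |f x| ≤ 1) (h : (∀ i, V i) → ℝ) :
    cubeAvg B (fun x => f x * h x) ^ 2 ≤ cubeAvg (insert c B) h := by
  rw [cubeAvg_mul_eq hc hf, cubeAvg_insert hc]
  set Θ : (∀ i, V i) → (∀ i, V i) → ℝ :=
    fun x₀ x₁ => ∏ ω ∈ cubePatterns B, f (mixPoint ω x₀ x₁)
  set Ψ : (∀ i, V i) → (∀ i, V i) → ℝ :=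
    fun x₀ x₁ => 𝔼 a : V c, ∏ ω ∈ cubePatterns B, h (update (mixPoint ω x₀ x₁) c a)
  have hΘ : ∀ x₀ x₁, Θ x₀ x₁ ^ 2 ≤ 1 := fun x₀ x₁ => by
    rw [sq_le_one_iff_abs_le_one, Finset.abs_prod]
    exact Finset.prod_le_one (fun _ _ => abs_nonneg _) fun _ _ => hf₁ _
  calc (𝔼 x₀, 𝔼 x₁, Θ x₀ x₁ * Ψ x₀ x₁) ^ 2 ≤ 𝔼 x₀, (𝔼 x₁, Θ x₀ x₁ * Ψ x₀ x₁) ^ 2 :=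
        sq_expect_le_expect_sq _
    _ ≤ 𝔼 x₀, 𝔼 x₁, (Θ x₀ x₁ * Ψ x₀ x₁) ^ 2 :=
        Finset.expect_le_expect fun _ _ => sq_expect_le_expect_sq _
    _ ≤ 𝔼 x₀, 𝔼 x₁, Ψ x₀ x₁ ^ 2 := by
        refine Finset.expect_le_expect fun x₀ _ => Finset.expect_le_expect fun x₁ _ => ?_
        rw [mul_pow]
        exact mul_le_of_le_one_left (sq_nonneg _) (hΘ x₀ x₁)

lemma cubeAvg_mul_prod_pow_le {B D : Finset ι} (hBD : Disjoint B D) {f : ι → (∀ i, V i) → ℝ}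
    (hf : ∀ j ∈ D, ∀ x a, f j (update x j a) = f j x) (hf₁ : ∀ j ∈ D, ∀ x, |f j x| ≤ 1)
    (h : (∀ i, V i) → ℝ) :
    cubeAvg B (fun x => h x * ∏ j ∈ D, f j x) ^ 2 ^ #D ≤ cubeAvg (B ∪ D) h := by
  induction D using Finset.induction_on generalizing B with
  | empty => simp
  | @insert c D hcD ih =>
    have hcB : c ∉ B := Finset.disjoint_right.mp hBD (Finset.mem_insert_self c D)
    have hBD' : Disjoint (insert c B) D :=
      Finset.disjoint_insert_left.mpr ⟨hcD, Finset.disjoint_of_subset_right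
        (Finset.subset_insert c D) hBD⟩
    have hstep := sq_cubeAvg_mul_le hcB (hf c (Finset.mem_insert_self c D))
      (hf₁ c (Finset.mem_insert_self c D)) fun x => h x * ∏ j ∈ D, f j x
    calc cubeAvg B (fun x => h x * ∏ j ∈ insert c D, f j x) ^ 2 ^ #(insert c D)
        = (cubeAvg B (fun x => f c x * (h x * ∏ j ∈ D, f j x)) ^ 2) ^ 2 ^ #D := by
          simp only [Finset.prod_insert hcD, Finset.card_insert_of_notMem hcD, pow_succ',
            pow_mul, mul_left_comm]
      _ ≤ cubeAvg (insert c B) (fun x => h x * ∏ j ∈ D, f j x) ^ 2 ^ #D :=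
          pow_le_pow_left₀ (sq_nonneg _) hstep _
      _ ≤ cubeAvg (insert c B ∪ D) h :=
          ih hBD' (fun j hj => hf j (Finset.mem_insert_of_mem hj))
            fun j hj => hf₁ j (Finset.mem_insert_of_mem hj)
      _ = cubeAvg (B ∪ insert c D) h := by rw [Finset.insert_union, Finset.union_insert]

lemma expect_comp_restrict_ne (c : ι) (u : (∀ i : {i // i ≠ c}, V i) → ℝ) :
    𝔼 x : ∀ i, V i, u (fun i => x i) = 𝔼 z, u z := by
  calc 𝔼 x : ∀ i, V i, u (fun i => x i) = 𝔼 p : V c × (∀ i : {i // i ≠ c}, V i), u p.2 :=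
        Fintype.expect_equiv (Equiv.piSplitAt c V) _ _ fun _ => rfl
    _ = 𝔼 z, u z := by
        rw [← expect_expect_eq_expect_prod (fun _ z => u z), Fintype.expect_const]

lemma cubeAvg_erase_eq (k : ι) (g : (∀ i : {i // i ≠ k}, V i) → ℝ) :
    cubeAvg (univ.erase k) (fun x => g fun i => x i)
      = 𝔼 y₀, 𝔼 y₁, ∏ σ : {i // i ≠ k} → Bool, g (mixPoint σ y₀ y₁) := by
  have hprod : ∀ x₀ x₁ : ∀ i, V i,
      ∏ ω ∈ cubePatterns (univ.erase k), g (fun i => mixPoint ω x₀ x₁ i)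
        = ∏ σ : {i // i ≠ k} → Bool, g (mixPoint σ (fun i => x₀ i) fun i => x₁ i) := by
    intro x₀ x₁
    refine Finset.prod_nbij' (fun ω i => ω i) (fun σ i => if h : i = k then false else σ ⟨i, h⟩)
      (fun _ _ => Finset.mem_univ _) ?_ ?_ ?_ fun _ _ => rfl
    · intro σ _
      simp [mem_cubePatterns]
    · intro ω hω
      ext i
      rcases eq_or_ne i k with rfl | hi
      · simpa using (mem_cubePatterns.mp hω i (by simp)).symm
      · simp [hi]
    · intro σ _
      ext i
      simp [i.2]
  simp only [cubeAvg, hprod]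
  rw [Finset.expect_congr rfl fun x₀ _ => expect_comp_restrict_ne k
    fun y₁ => ∏ σ : {i // i ≠ k} → Bool, g (mixPoint σ (fun i => x₀ i) y₁)]
  exact expect_comp_restrict_ne k
    fun y₀ => 𝔼 y₁, ∏ σ : {i // i ≠ k} → Bool, g (mixPoint σ y₀ y₁)

lemma cubeAvg_erase_le_of_boxNorm_le {k : ι} (hk : (univ.erase k).Nonempty)
    {g : (∀ i : {i // i ≠ k}, V i) → ℝ} {β : ℝ} (hβ : boxNorm g ≤ β) :
    cubeAvg (univ.erase k) (fun x => g fun i => x i) ≤ β ^ 2 ^ Fintype.card {i // i ≠ k} := by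
  set n := Fintype.card {i // i ≠ k}
  set X := cubeAvg (univ.erase k) (fun x => g fun i => x i)
  have hX : 0 ≤ X := cubeAvg_nonneg hk _
  have hnorm : boxNorm g = X ^ ((2 ^ n : ℕ) : ℝ)⁻¹ := by
    rw [boxNorm, ← cubeAvg_erase_eq, one_div, Nat.cast_pow, Nat.cast_ofNat]
  calc X = (X ^ ((2 ^ n : ℕ) : ℝ)⁻¹) ^ 2 ^ n := (Real.rpow_inv_natCast_pow hX (by positivity)).symm
    _ ≤ β ^ 2 ^ n := pow_le_pow_left₀ (by positivity) (hnorm ▸ hβ) _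

end Cube

section Hypergraph

variable {r : ℕ} {V : Fin (r + 1) → Type}

lemma restrict_ne_update_zero (x : ∀ i, V i) (a : V 0) (j : Fin (r + 1)) :
    (fun i : {i // i ≠ j} => update x 0 a i) = glue j a fun i => x i := by
  ext ⟨i, hi⟩
  rcases eq_or_ne i 0 with rfl | hi0 <;> simp [glue, *]

variable [∀ i, Fintype (V i)]

lemma le_hypSup (ν : ∀ j : Fin (r + 1), EdgeSpace V j → ℝ) (j : Fin (r + 1)) (z : EdgeSpace V j) :
    ν j z ≤ hypSup V ν :=
  (le_ciSup (Set.finite_range _).bddAbove z).trans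
    (le_ciSup (f := fun j => ⨆ z, ν j z) (Set.finite_range _).bddAbove j)

variable [∀ i, Nonempty (V i)]

/-- The square in the theorem is `cubeAvg {0}`, i.e. it doubles the vertex `0`; doubling the
other `r - 1` vertices of `e_k` one at a time strips off the factors `f j`. -/
lemma cubeAvg_zero_mul_prod_le {k : Fin (r + 1)} (hk : k ≠ 0) {f : Fin (r + 1) → (∀ i, V i) → ℝ}
    (hf : ∀ j x a, f j (update x j a) = f j x) (hf₁ : ∀ j x, |f j x| ≤ 1)
    {g : EdgeSpace V k → ℝ} {b : ℝ} (hb : boxNorm g ≤ b) :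
    cubeAvg {0} (fun x : ∀ i, V i => g (fun i => x i) * ∏ j ∈ (univ.erase 0).erase k, f j x)
      ≤ b ^ 2 := by
  set D := (univ.erase (0 : Fin (r + 1))).erase k
  have hD : #D = r - 1 := by simp [D, Finset.card_erase_of_mem, hk]
  have hr : 2 ^ Fintype.card {i // i ≠ k} = 2 * 2 ^ (r - 1) := by
    have hr₁ : 0 < (k : ℕ) := Fin.pos_iff_ne_zero.mpr hk
    rw [← pow_succ', show Fintype.card {i // i ≠ k} = r by simp]
    congr 1
    omega
  have hunion : {0} ∪ D = univ.erase k := by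
    ext i
    rcases eq_or_ne i 0 with rfl | hi <;> simp [D, *, Ne.symm hk]
  have hchain := cubeAvg_mul_prod_pow_le (B := {0}) (D := D) (by simp [D])
    (fun j _ => hf j) (fun j _ => hf₁ j) fun x : ∀ i, V i => g fun i => x i
  rw [hunion, hD] at hchain
  have hbox := cubeAvg_erase_le_of_boxNorm_le ⟨0, by simp [Ne.symm hk]⟩ hb
  rw [hr, pow_mul] at hbox
  exact (pow_le_pow_iff_left₀ (cubeAvg_nonneg (by simp) _) (by positivity)
    (pow_ne_zero _ two_ne_zero)).mp (hchain.trans hbox)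

lemma cubeAvg_zero_prod_eq (ν : ∀ j : Fin (r + 1), EdgeSpace V j → ℝ) (S : Finset (Fin (r + 1))) :
    cubeAvg {0} (fun x : ∀ i, V i => ∏ j ∈ S, (ν j (fun i => x i) - 1))
      = 𝔼 y : EdgeSpace V 0, (𝔼 u : V 0, ∏ j ∈ S, (ν j (glue j u y) - 1)) ^ 2 := by
  simp only [cubeAvg_singleton, restrict_ne_update_zero]
  exact expect_comp_restrict_ne 0 fun y => (𝔼 u : V 0, ∏ j ∈ S, (ν j (glue j u y) - 1)) ^ 2

lemma expect_sq_expect_prod_sub_one_le {ν : ∀ j : Fin (r + 1), EdgeSpace V j → ℝ} {M β : ℝ}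
    (hM : 1 ≤ M) (hν₀ : ∀ j z, 0 ≤ ν j z) (hνM : ∀ j z, ν j z ≤ M)
    {S : Finset (Fin (r + 1))} (hS : S ⊆ univ.erase 0) {k : Fin (r + 1)} (hkS : k ∈ S)
    (hbox : boxNorm (fun z : EdgeSpace V k => ν k z - 1) ≤ β * (M ^ (r - 1))⁻¹) :
    𝔼 y : EdgeSpace V 0, (𝔼 u : V 0, ∏ j ∈ S, (ν j (glue j u y) - 1)) ^ 2 ≤ β ^ 2 := by
  have hk : k ≠ 0 := (Finset.mem_erase.mp (hS hkS)).1
  set g : Fin (r + 1) → (∀ i, V i) → ℝ := fun j x => ν j (fun i => x i) - 1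
  set f : Fin (r + 1) → (∀ i, V i) → ℝ := fun j x => if j ∈ S then g j x / M else 1
  have hf : ∀ j x a, f j (update x j a) = f j x := by
    intro j x a
    simp only [f, g, restrict_ne_update_self]
  have hf₁ : ∀ j x, |f j x| ≤ 1 := by
    intro j x
    simp only [f]
    split_ifs
    · exact abs_sub_one_div_le_one hM (hν₀ _ _) (hνM _ _)
    · simp
  have hSk : (univ.erase 0).erase k ∩ S = S.erase k := by
    rw [Finset.erase_inter, Finset.inter_eq_right.mpr hS]
  have hprod : ∀ x, ∏ j ∈ S, g j x
      = M ^ (#S - 1) * (g k x * ∏ j ∈ (univ.erase 0).erase k, f j x) := by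
    intro x
    rw [Finset.prod_ite_mem, hSk, Finset.prod_div_distrib, Finset.prod_const,
      Finset.card_erase_of_mem hkS, ← Finset.mul_prod_erase S _ hkS]
    field_simp
  have hcard : #S - 1 ≤ r - 1 := by
    have : #S ≤ r := by simpa using Finset.card_le_card hS
    omega
  have hcount := cubeAvg_zero_mul_prod_le hk hf hf₁ hbox
  rw [← cubeAvg_zero_prod_eq]
  calc cubeAvg {0} (fun x => ∏ j ∈ S, g j x)
      = (M ^ (#S - 1)) ^ 2
          * cubeAvg {0} (fun x => g k x * ∏ j ∈ (univ.erase 0).erase k, f j x) := by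
        simp only [hprod, cubeAvg_singleton_const_mul]
    _ ≤ (M ^ (r - 1)) ^ 2 * (β * (M ^ (r - 1))⁻¹) ^ 2 :=
        mul_le_mul (pow_le_pow_left₀ (by positivity) (pow_le_pow_right₀ hM hcard) 2)
          hcount (cubeAvg_nonneg (by simp) _) (by positivity)
    _ = β ^ 2 := by field_simp

lemma expect_prod_sub_one_eq_sum (ν : ∀ j : Fin (r + 1), EdgeSpace V j → ℝ) (y : EdgeSpace V 0) :
    (𝔼 u : V 0, ∏ j : {j : Fin (r + 1) // j ≠ 0}, ν j (glue (j : Fin (r + 1)) u y)) - 1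
      = ∑ S ∈ (univ.erase 0).powerset.erase ∅, 𝔼 u : V 0, ∏ j ∈ S, (ν j (glue j u y) - 1) := by
  rw [← Finset.expect_sum_comm]
  calc _ = 𝔼 u : V 0,
          ((∏ j : {j : Fin (r + 1) // j ≠ 0}, ν j (glue (j : Fin (r + 1)) u y)) - 1) := by
        rw [Finset.expect_sub_distrib, Fintype.expect_const]
    _ = _ := Finset.expect_congr rfl fun u _ => by
        rw [← Finset.prod_subtype (univ.erase 0) (fun j => by simp) fun j => ν j (glue j u y),
          prod_sub_one_eq_sum]

end Hypergraph

theorem nu_prime_close_to_one_general (r : ℕ) (ε : ℝ) (hε : 0 < ε) :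
    ∃ δ : ℝ, 0 < δ ∧
      ∀ (V : Fin (r + 1) → Type) [∀ i, Fintype (V i)] [∀ i, Nonempty (V i)]
        (ν : ∀ j : Fin (r + 1), EdgeSpace V j → ℝ),
        (∀ j x, 0 ≤ ν j x) → 1 ≤ hypSup V ν →
        (∀ j : Fin (r + 1),
          boxNorm (fun z : EdgeSpace V j => ν j z - 1) ≤ δ * (hypSup V ν ^ (r - 1))⁻¹) →
        𝔼 y : EdgeSpace V 0,
          ((𝔼 x₀ : V 0, ∏ j : {j : Fin (r + 1) // j ≠ 0},
              ν j (glue (j : Fin (r + 1)) x₀ y)) - 1) ^ 2 ≤ ε := by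
  refine ⟨√ε / 2 ^ r, by positivity, fun V _ _ ν hν₀ hM hbox => ?_⟩
  set 𝒮 := (univ.erase (0 : Fin (r + 1))).powerset.erase ∅
  have hQ : ∀ S ∈ 𝒮, 𝔼 y : EdgeSpace V 0, (𝔼 u : V 0, ∏ j ∈ S, (ν j (glue j u y) - 1)) ^ 2
      ≤ (√ε / 2 ^ r) ^ 2 := by
    intro S hS
    obtain ⟨hS₀, hS⟩ := Finset.mem_erase.mp hS
    obtain ⟨k, hk⟩ := Finset.nonempty_iff_ne_empty.mpr hS₀
    exact expect_sq_expect_prod_sub_one_le hM hν₀ (le_hypSup ν) (Finset.mem_powerset.mp hS) hk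
      (hbox k)
  have hcard : (#𝒮 : ℝ) ≤ 2 ^ r := by
    have : #𝒮 ≤ 2 ^ r := (Finset.card_erase_le).trans (by simp)
    exact_mod_cast this
  simp only [expect_prod_sub_one_eq_sum]
  calc 𝔼 y : EdgeSpace V 0, (∑ S ∈ 𝒮, 𝔼 u : V 0, ∏ j ∈ S, (ν j (glue j u y) - 1)) ^ 2
      ≤ #𝒮 ^ 2 * (√ε / 2 ^ r) ^ 2 := expect_sq_sum_le 𝒮 _ hQ
    _ ≤ (2 ^ r) ^ 2 * (√ε / 2 ^ r) ^ 2 := by gcongr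
    _ = ε := by
        rw [← mul_pow, mul_div_cancel₀ _ (by positivity), Real.sq_sqrt hε.le]

/-- If `‖ν_e − 1‖_{U^e} ≤ δ·‖ν‖_∞^{−(r−1)}` for all edges, then the density
`ν'_{e₀}(x_{e₀}) = 𝔼[∏_{e ≠ e₀} ν_e(x_e) | x₀ ∈ V₀]` is close to `1` in mean square. -/
theorem nu_prime_close_to_one (r : ℕ) (hr : 2 ≤ r) (ε : ℝ) (hε : 0 < ε) :
    ∃ δ : ℝ, 0 < δ ∧
      ∀ (V : Fin (r + 1) → Type) [∀ i, Fintype (V i)] [∀ i, Nonempty (V i)]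
        (ν : ∀ j : Fin (r + 1), EdgeSpace V j → ℝ),
        (∀ j x, 0 ≤ ν j x) → 1 ≤ hypSup V ν →
        (∀ j : Fin (r + 1),
          boxNorm (fun z : EdgeSpace V j => ν j z - 1) ≤ δ * (hypSup V ν ^ (r - 1))⁻¹) →
        𝔼 y : EdgeSpace V 0,
          ((𝔼 x₀ : V 0, ∏ j : {j : Fin (r + 1) // j ≠ 0},
              ν j (glue (j : Fin (r + 1)) x₀ y)) - 1) ^ 2 ≤ ε :=
  nu_prime_close_to_one_general r ε hε
end

section
/- Let N ≥ 1 and r ≥ 1 be integers, let c₁, …, c_r be units of ℤ_N, and let ν : ℤ_N → ℝ. Define g : (ℤ_N)^r → ℝ by g(x₁, …, x_r) = ν(c₁x₁ + ⋯ + c_r x_r). Then the Gowers box norm of g over V₁ × ⋯ × V_r with V₁ = ⋯ = V_r = ℤ_N equals the Gowers uniformity norm of ν: ‖g‖_{U^{{1,…,r}}} = ‖ν‖_{U^r}. -/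
open Finset
open scoped BigOperators

/-- The Gowers uniformity norm `‖f‖_{U^r}` of `f : ℤ_N → ℝ`. -/
noncomputable def gowersNorm (N : ℕ) [NeZero N] (r : ℕ) (f : ZMod N → ℝ) : ℝ :=
  (𝔼 x₀ : ZMod N, 𝔼 x : Fin r → ZMod N, ∏ ω : Fin r → Bool,
      f (x₀ + ∑ i, if ω i then x i else 0)) ^ ((1 : ℝ) / 2 ^ r)

/-! The box norm of `x ↦ ν (∑ cᵢ xᵢ)` is computed by two changes of variables. For fixed `x₀`,
the substitution `yᵢ = cᵢ (x₁ᵢ - x₀ᵢ)` is a bijection turning the inner average into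
`H (∑ cᵢ x₀ᵢ)`, where `H t = 𝔼 y, ∏ ω, ν (t + ∑_{ωᵢ = 1} yᵢ)`. Since `x₀ ↦ ∑ cᵢ x₀ᵢ` is a surjective
homomorphism, it pushes the uniform measure forward to the uniform measure, so averaging over
`x₀` gives `𝔼 t, H t`, which is `‖ν‖_{U^r} ^ 2^r`. -/

theorem sum_mul_mixPoint {ι R : Type} [Fintype ι] [Ring R] (c : ι → R) (ω : ι → Bool)
    (x₀ x₁ : ι → R) :
    ∑ i, c i * mixPoint ω x₀ x₁ i =
      ∑ i, c i * x₀ i + ∑ i, if ω i then c i * (x₁ i - x₀ i) else 0 := by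
  rw [← sum_add_distrib]
  refine sum_congr rfl fun i _ => ?_
  cases h : ω i <;> simp [mixPoint, h, mul_sub]

theorem expect_prod_linearForm_mixPoint {ι R : Type} {M : Type*} [Fintype ι] [DecidableEq ι]
    [Ring R] [Fintype R] [CommSemiring M] [Module ℚ≥0 M] (c : ι → Rˣ) (f : R → M) (x₀ : ι → R) :
    𝔼 x₁ : ι → R, ∏ ω : ι → Bool, f (∑ i, (c i : R) * mixPoint ω x₀ x₁ i) =
      𝔼 y : ι → R, ∏ ω : ι → Bool, f (∑ i, (c i : R) * x₀ i + ∑ i, if ω i then y i else 0) :=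
  Fintype.expect_equiv
    (Equiv.piCongrRight fun i => (Equiv.subRight (x₀ i)).trans (Units.mulLeft (c i))) _ _
    fun x₁ => by simp [sum_mul_mixPoint, Units.mulLeft]

/-- Average over the translates `x + s t` by a section `s` of `φ`; then `φ x + t` is uniform
in `t`. -/
theorem AddMonoidHom.expect_comp_of_surjective {G H M : Type*} [AddGroup G] [AddGroup H]
    [Fintype G] [Fintype H] [AddCommMonoid M] [Module ℚ≥0 M] (φ : G →+ H)
    (hφ : Function.Surjective φ) (f : H → M) :
    𝔼 x, f (φ x) = 𝔼 y, f y := by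
  choose s hs using hφ
  calc 𝔼 x, f (φ x) = 𝔼 t, 𝔼 x, f (φ (x + s t)) := by
        refine (expect_const univ_nonempty _).symm.trans (expect_congr rfl fun t _ => ?_)
        exact (Fintype.expect_equiv (Equiv.addRight (s t)) _ _ fun x => rfl).symm
    _ = 𝔼 x, 𝔼 t, f (φ x + t) := by simp only [map_add, hs]; exact expect_comm _ _ _
    _ = 𝔼 y, f y := by
        refine (expect_congr rfl fun x _ => ?_).trans (expect_const univ_nonempty _)
        exact Fintype.expect_equiv (Equiv.addLeft (φ x)) _ _ fun t => rfl

theorem linearForm_surjective {ι R : Type*} [Fintype ι] [DecidableEq ι] [Ring R] (c : ι → R)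
    (i₀ : ι) (hc : IsUnit (c i₀)) : Function.Surjective fun x : ι → R => ∑ i, c i * x i := by
  obtain ⟨u, hu⟩ := hc
  refine fun t => ⟨Pi.single i₀ (↑u⁻¹ * t), ?_⟩
  simp [Pi.single_apply, ← hu]

theorem expect_comp_linearForm {ι R M : Type*} [Fintype ι] [DecidableEq ι] [Ring R] [Fintype R]
    [AddCommMonoid M] [Module ℚ≥0 M] (c : ι → R) (i₀ : ι) (hc : IsUnit (c i₀)) (f : R → M) :
    𝔼 x : ι → R, f (∑ i, c i * x i) = 𝔼 t, f t :=
  (AddMonoidHom.mk' (fun x : ι → R => ∑ i, c i * x i) fun x y => by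
      simp only [Pi.add_apply, mul_add, sum_add_distrib]).expect_comp_of_surjective
    (linearForm_surjective c i₀ hc) f

theorem boxNorm_linear_form_eq_gowersNorm_general (N : ℕ) [NeZero N]
    (r : ℕ) (hr : 1 ≤ r) (c : Fin r → (ZMod N)ˣ) (ν : ZMod N → ℝ) :
    boxNorm (fun x : Fin r → ZMod N => ν (∑ i, (c i : ZMod N) * x i)) =
      gowersNorm N r ν := by
  unfold boxNorm gowersNorm
  rw [Fintype.card_fin]
  congr 1
  simp only [expect_prod_linearForm_mixPoint]
  exact expect_comp_linearForm (fun i => (c i : ZMod N)) ⟨0, hr⟩ (c _).isUnit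
    fun t => 𝔼 y : Fin r → ZMod N, ∏ ω : Fin r → Bool, ν (t + ∑ i, if ω i then y i else 0)

/-- Representing a weight `ν : ℤ_N → ℝ` as a hypergraph weight via an invertible linear
form preserves the Gowers uniformity norm: the box norm of
`g(x₁, …, x_r) = ν(c₁x₁ + ⋯ + c_rx_r)` equals `‖ν‖_{U^r}`. -/
theorem boxNorm_linear_form_eq_gowersNorm (N : ℕ) (hN : 1 ≤ N) [NeZero N]
    (r : ℕ) (hr : 1 ≤ r) (c : Fin r → (ZMod N)ˣ) (ν : ZMod N → ℝ) :
    boxNorm (fun x : Fin r → ZMod N => ν (∑ i, (c i : ZMod N) * x i)) =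
      gowersNorm N r ν :=
  boxNorm_linear_form_eq_gowersNorm_general N r hr c ν
end
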